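/- arXiv:2406.04132 — 9 statements merged into one kernel-verified Lean document; each statement's English description precedes it below -/
import Mathlib

section
/- Let G be a finitely generated group and let N be a nontrivial finitely generated normal subgroup of G. Then N is realizable in G (i.e., there exists a nonempty finite alphabet A and a nonempty G-SFT X ⊆ A^G with stab(x) = N for every x ∈ X) if and only if the quotient group G/N admits a nonempty strongly aperiodic SFT. -/
section SymbolicDynamics

variable {G : Type} [Group G] {A : Type}

/-- The left shift action of `G` on configurations `G → A`: `(g · x) h = x (g⁻¹ h)`. -/
def shiftAct (g : G) (x : G → A) : G → A := fun h => x (g⁻¹ * h)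

/-- A pattern: a finite support together with a map assigning letters. -/
abbrev Pattern (G A : Type) := Finset G × (G → A)

/-- A pattern `p` appears in a configuration `x` if some translate of `x` agrees with `p`
on its support. -/
def Appears (p : Pattern G A) (x : G → A) : Prop :=
  ∃ g : G, ∀ h ∈ p.1, x (g * h) = p.2 h

/-- The set of configurations avoiding every pattern in `𝓕`. -/
def shiftSpace (𝓕 : Set (Pattern G A)) : Set (G → A) :=
  {x | ∀ p ∈ 𝓕, ¬ Appears p x}

/-- A subshift: a set of configurations defined by a set of forbidden patterns. -/
def IsSubshift (X : Set (G → A)) : Prop :=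
  ∃ 𝓕 : Set (Pattern G A), X = shiftSpace 𝓕

/-- A subshift of finite type: defined by a finite set of forbidden patterns. -/
def IsSFT (X : Set (G → A)) : Prop :=
  ∃ 𝓕 : Set (Pattern G A), 𝓕.Finite ∧ X = shiftSpace 𝓕

/-- The stabilizer of a configuration under the shift action. -/
def stab (x : G → A) : Subgroup G where
  carrier := {g | shiftAct g x = x}
  one_mem' := by
    show shiftAct 1 x = x
    funext h; simp [shiftAct]
  mul_mem' := by
    intro a b ha hb
    have ha' : shiftAct a x = x := ha
    have hb' : shiftAct b x = x := hb
    show shiftAct (a * b) x = x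
    funext h
    have h1 := congrFun hb' (a⁻¹ * h)
    have h2 := congrFun ha' h
    simp only [shiftAct] at h1 h2 ⊢
    rw [show (a * b)⁻¹ * h = b⁻¹ * (a⁻¹ * h) by rw [mul_inv_rev, mul_assoc], h1, h2]
  inv_mem' := by
    intro a ha
    have ha' : shiftAct a x = x := ha
    show shiftAct a⁻¹ x = x
    funext h
    have h1 := congrFun ha' (a * h)
    simp only [shiftAct] at h1 ⊢
    simp only [inv_inv]
    rw [← h1, inv_mul_cancel_left]

/-- The orbit of a configuration under the shift action. -/
def orbitSet (x : G → A) : Set (G → A) := Set.range fun g => shiftAct g x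

/-- A subshift is weakly aperiodic if every configuration has an infinite orbit. -/
def WeaklyAperiodic (X : Set (G → A)) : Prop := ∀ x ∈ X, (orbitSet x).Infinite

/-- A subshift is strongly aperiodic if every configuration has trivial stabilizer. -/
def StronglyAperiodic (X : Set (G → A)) : Prop := ∀ x ∈ X, stab x = ⊥

/-- A family of subgroups of `G` is realizable if it is the set of stabilizers of a
nonempty `G`-SFT over some nonempty finite alphabet. -/
def Realizable (𝒢 : Set (Subgroup G)) : Prop :=
  ∃ (A : Type) (_ : Finite A) (_ : Nonempty A) (X : Set (G → A)),
    IsSFT X ∧ X.Nonempty ∧ stab '' X = 𝒢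

end SymbolicDynamics

/-- A group is periodically rigid if every nonempty weakly aperiodic SFT on it is
strongly aperiodic. -/
def PeriodicallyRigid (G : Type) [Group G] : Prop :=
  ∀ (A : Type) (_ : Finite A) (_ : Nonempty A) (X : Set (G → A)),
    IsSFT X → X.Nonempty → WeaklyAperiodic X → StronglyAperiodic X

/-- A group is virtually `ℤ` if it has a finite-index subgroup isomorphic to `ℤ`. -/
def VirtuallyZ (G : Type) [Group G] : Prop :=
  ∃ H : Subgroup G, H.FiniteIndex ∧ Nonempty (H ≃* Multiplicative ℤ)

/-- A group is virtually `ℤ²` if it has a finite-index subgroup isomorphic to `ℤ²`. -/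
def VirtuallyZ2 (G : Type) [Group G] : Prop :=
  ∃ H : Subgroup G, H.FiniteIndex ∧ Nonempty (H ≃* Multiplicative (ℤ × ℤ))



section Helpers2
variable {G : Type} [Group G] {A : Type} {N : Subgroup G} [N.Normal]

lemma shiftAct_quot_iff (y : (G ⧸ N) → A) (g : G) :
    shiftAct g (fun h : G => y ↑h) = (fun h : G => y ↑h) ↔ shiftAct (↑g : G ⧸ N) y = y := by
  constructor
  · intro hx
    funext k
    obtain ⟨h, rfl⟩ := QuotientGroup.mk_surjective k
    exact congrFun hx h
  · intro hy
    funext h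
    exact congrFun hy (↑h : G ⧸ N)

lemma quot_congr (x : G → A) (hc : ∀ n ∈ N, ∀ g : G, x (g * n) = x g)
    (g g' : G) (h : (↑g : G ⧸ N) = ↑g') : x g = x g' := by
  have hn : g⁻¹ * g' ∈ N := QuotientGroup.eq.mp h
  have := hc _ hn g
  rw [mul_inv_cancel_left] at this
  exact this.symm

lemma factor_out (x : G → A) (hc : ∀ n ∈ N, ∀ g : G, x (g * n) = x g) (g : G) :
    x ((↑g : G ⧸ N).out) = x g :=
  quot_congr x hc _ _ (Quotient.out_eq _)

lemma right_const_of_stab (x : G → A) (hst : ∀ n ∈ N, shiftAct n x = x) :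
    ∀ n ∈ N, ∀ g : G, x (g * n) = x g := by
  intro n hn g
  have hm : g * n * g⁻¹ ∈ N := Subgroup.Normal.conj_mem ‹N.Normal› n hn g
  have h1 := congrFun (hst _ (N.inv_mem hm)) g
  simp only [shiftAct, inv_inv] at h1
  rw [show g * n = g * n * g⁻¹ * g by group]
  exact h1

end Helpers2

/-- A nontrivial finitely generated normal subgroup `N` of a finitely
generated group `G` is realizable in `G` if and only if `G/N` admits a nonempty strongly
aperiodic SFT. -/
theorem statement0 {G : Type} [Group G] [Group.FG G] (N : Subgroup G) [N.Normal]
    (hN : N ≠ ⊥) (hNfg : N.FG) :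
    Realizable ({N} : Set (Subgroup G)) ↔
      ∃ (A : Type) (_ : Finite A) (_ : Nonempty A) (X : Set (G ⧸ N → A)),
        IsSFT X ∧ X.Nonempty ∧ StronglyAperiodic X := by
  classical
  constructor
  · rintro ⟨A, hAfin, hAne, X, ⟨𝓕, h𝓕fin, rfl⟩, hXne, hstab⟩
    have hstabx : ∀ x ∈ shiftSpace 𝓕, stab x = N := by
      intro x hx
      have : stab x ∈ ({N} : Set (Subgroup G)) := hstab ▸ Set.mem_image_of_mem _ hx
      simpa using this
    have hconst : ∀ x ∈ shiftSpace 𝓕, ∀ n ∈ N, ∀ g : G, x (g * n) = x g := by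
      intro x hx
      refine right_const_of_stab x ?_
      intro n hn
      have hnm : n ∈ stab x := by rw [hstabx x hx]; exact hn
      exact hnm
    set Coh : Pattern G A → Prop :=
      fun p => ∀ h₁ ∈ p.1, ∀ h₂ ∈ p.1, (h₁ : G ⧸ N) = (h₂ : G ⧸ N) → p.2 h₁ = p.2 h₂ with hCoh
    set proj : Pattern G A → Pattern (G ⧸ N) A := fun p =>
      (p.1.image (fun h : G => (h : G ⧸ N)),
       fun k => if hk : ∃ h ∈ p.1, (h : G ⧸ N) = k then p.2 hk.choose else p.2 1) with hprojdef
    have hproj_spec : ∀ p : Pattern G A, Coh p → ∀ h ∈ p.1, (proj p).2 ↑h = p.2 h := by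
      intro p hp h hh
      have hk : ∃ h' ∈ p.1, (h' : G ⧸ N) = (h : G ⧸ N) := ⟨h, hh, rfl⟩
      simp only [hprojdef, dif_pos hk]
      exact hp _ hk.choose_spec.1 _ hh hk.choose_spec.2
    have happ : ∀ p : Pattern G A, Coh p → ∀ y : (G ⧸ N) → A,
        (Appears p (fun h : G => y ↑h) ↔ Appears (proj p) y) := by
      intro p hp y
      constructor
      · rintro ⟨g, hg⟩
        refine ⟨↑g, ?_⟩
        intro k hk
        simp only [hprojdef, Finset.mem_image] at hk
        obtain ⟨h, hh, rfl⟩ := hk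
        rw [hproj_spec p hp h hh]
        exact hg h hh
      · rintro ⟨gb, hg⟩
        obtain ⟨g, rfl⟩ := QuotientGroup.mk_surjective gb
        refine ⟨g, ?_⟩
        intro h hh
        have := hg (↑h) (by simp only [hprojdef]; exact Finset.mem_image_of_mem _ hh)
        rw [hproj_spec p hp h hh] at this
        exact this
    have hincoh : ∀ p : Pattern G A, ∀ y : (G ⧸ N) → A,
        Appears p (fun h : G => y ↑h) → Coh p := by
      rintro p y ⟨g, hg⟩ h₁ hh₁ h₂ hh₂ heq
      rw [← hg h₁ hh₁, ← hg h₂ hh₂]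
      show y ↑(g * h₁) = y ↑(g * h₂)
      have : (↑(g * h₁) : G ⧸ N) = ↑(g * h₂) := by
        show (↑g * ↑h₁ : G ⧸ N) = ↑g * ↑h₂
        rw [heq]
      rw [this]
    have hmem : ∀ y : (G ⧸ N) → A,
        y ∈ shiftSpace (proj '' {p ∈ 𝓕 | Coh p}) ↔ (fun h : G => y ↑h) ∈ shiftSpace 𝓕 := by
      intro y
      constructor
      · intro hy p hp hap
        have hcoh := hincoh p y hap
        exact hy (proj p) ⟨p, ⟨hp, hcoh⟩, rfl⟩ ((happ p hcoh y).mp hap)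
      · rintro hx q ⟨p, ⟨hp, hcoh⟩, rfl⟩ hap
        exact hx p hp ((happ p hcoh y).mpr hap)
    refine ⟨A, hAfin, hAne, shiftSpace (proj '' {p ∈ 𝓕 | Coh p}),
      ⟨_, (h𝓕fin.subset (Set.sep_subset _ _)).image _, rfl⟩, ?_, ?_⟩
    · obtain ⟨x, hx⟩ := hXne
      refine ⟨fun k : G ⧸ N => x k.out, ?_⟩
      have hxy : (fun h : G => (fun k : G ⧸ N => x k.out) ↑h) = x :=
        funext fun g => factor_out x (hconst x hx) g
      rw [hmem, hxy]
      exact hx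
    · intro y hy
      have hx : (fun h : G => y ↑h) ∈ shiftSpace 𝓕 := (hmem y).mp hy
      have hst := hstabx _ hx
      ext k
      simp only [Subgroup.mem_bot]
      constructor
      · intro hk
        obtain ⟨g, rfl⟩ := QuotientGroup.mk_surjective k
        have hgm : g ∈ stab (fun h : G => y ↑h) := (shiftAct_quot_iff y g).mpr hk
        rw [hst] at hgm
        exact (QuotientGroup.eq_one_iff g).mpr hgm
      · rintro rfl
        exact one_mem _
  · rintro ⟨A, hAfin, hAne, Y, ⟨𝓕, h𝓕fin, rfl⟩, hYne, hYap⟩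
    obtain ⟨S, hS⟩ := hNfg
    set lift : Pattern (G ⧸ N) A → Pattern G A := fun q =>
      (q.1.image Quotient.out, fun g => q.2 ↑g) with hliftdef
    set cpat : G → A → A → Pattern G A := fun s a b =>
      ({1, s}, fun h => if h = 1 then a else b) with hcpatdef
    set 𝓒 : Set (Pattern G A) :=
      {p | ∃ s ∈ S, s ≠ 1 ∧ ∃ a b : A, a ≠ b ∧ p = cpat s a b} with h𝓒def
    have h𝓒fin : 𝓒.Finite := by
      have hsub : 𝓒 ⊆ (fun t : G × A × A => cpat t.1 t.2.1 t.2.2) ''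
          ((S : Set G) ×ˢ ((Set.univ : Set A) ×ˢ (Set.univ : Set A))) := by
        rintro p ⟨s, hs, -, a, b, -, rfl⟩
        exact ⟨(s, a, b), ⟨hs, Set.mem_univ _, Set.mem_univ _⟩, rfl⟩
      haveI := hAfin
      exact (((S.finite_toSet).prod ((Set.finite_univ).prod Set.finite_univ)).image _).subset hsub
    set 𝓕X : Set (Pattern G A) := (lift '' 𝓕) ∪ 𝓒 with h𝓕Xdef
    have houteq : ∀ k : G ⧸ N, ((k.out : G) : G ⧸ N) = k := fun k => Quotient.out_eq k
    have hlift : ∀ q : Pattern (G ⧸ N) A, ∀ y : (G ⧸ N) → A,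
        (Appears (lift q) (fun h : G => y ↑h) ↔ Appears q y) := by
      intro q y
      constructor
      · rintro ⟨g, hg⟩
        refine ⟨↑g, fun k hk => ?_⟩
        have hgk := hg k.out (by simp only [hliftdef]; exact Finset.mem_image_of_mem _ hk)
        have e1 : ((g * k.out : G) : G ⧸ N) = ↑g * k := by
          show (↑g : G ⧸ N) * ↑(k.out) = ↑g * k
          rw [houteq]
        simp only [hliftdef] at hgk
        rw [e1, houteq] at hgk
        exact hgk
      · rintro ⟨gb, hg⟩
        obtain ⟨g, rfl⟩ := QuotientGroup.mk_surjective gb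
        refine ⟨g, fun h hh => ?_⟩
        simp only [hliftdef, Finset.mem_image] at hh
        obtain ⟨k, hk, rfl⟩ := hh
        have hgk := hg k hk
        show y ↑(g * k.out) = q.2 ↑(k.out)
        have e1 : ((g * k.out : G) : G ⧸ N) = ↑g * k := by
          show (↑g : G ⧸ N) * ↑(k.out) = ↑g * k
          rw [houteq]
        rw [e1, houteq]
        exact hgk
    have hcavoid : ∀ y : (G ⧸ N) → A, ∀ p ∈ 𝓒, ¬ Appears p (fun h : G => y ↑h) := by
      rintro y p ⟨s, hs, hs1, a, b, hab, rfl⟩ ⟨g, hg⟩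
      have h1 := hg 1 (by simp [hcpatdef])
      have h2 := hg s (by simp [hcpatdef])
      simp only [hcpatdef, if_pos rfl, if_neg hs1, mul_one] at h1 h2
      have hsN : s ∈ N := hS ▸ Subgroup.subset_closure hs
      have hgs : ((g * s : G) : G ⧸ N) = ↑g := by
        rw [QuotientGroup.eq]
        simpa [mul_assoc] using N.inv_mem hsN
      apply hab
      calc a = y ↑g := h1.symm
        _ = y ↑(g * s) := by rw [hgs]
        _ = b := h2
    have hXconst : ∀ x ∈ shiftSpace 𝓕X, ∀ n ∈ N, ∀ g : G, x (g * n) = x g := by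
      intro x hx
      have key : ∀ s ∈ S, ∀ g : G, x (g * s) = x g := by
        intro s hs g
        by_cases hs1 : s = (1 : G)
        · subst hs1; rw [mul_one]
        by_contra hne
        refine hx (cpat s (x g) (x (g * s)))
          (Set.mem_union_right _ ⟨s, hs, hs1, x g, x (g * s), fun h => hne h.symm, rfl⟩) ?_
        refine ⟨g, fun h hh => ?_⟩
        simp only [hcpatdef, Finset.mem_insert, Finset.mem_singleton] at hh
        rcases hh with rfl | rfl
        · simp [hcpatdef]
        · simp [hcpatdef, if_neg hs1]
      let T : Subgroup G :=
        { carrier := {n | ∀ g : G, x (g * n) = x g}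
          one_mem' := fun g => by rw [mul_one]
          mul_mem' := by
            intro a b ha hb g
            rw [← mul_assoc, hb (g * a)]
            exact ha g
          inv_mem' := by
            intro a ha g
            have := ha (g * a⁻¹)
            rw [inv_mul_cancel_right] at this
            exact this.symm }
      intro n hn
      have hNT : N ≤ T := hS ▸ (Subgroup.closure_le T).mpr (fun s hs => key s hs)
      exact hNT hn
    have hmemX : ∀ y : (G ⧸ N) → A,
        ((fun h : G => y ↑h) ∈ shiftSpace 𝓕X ↔ y ∈ shiftSpace 𝓕) := by
      intro y
      constructor
      · intro hxm q hq hap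
        exact hxm (lift q) (Set.mem_union_left _ ⟨q, hq, rfl⟩) ((hlift q y).mpr hap)
      · intro hy p hp hap
        rcases hp with ⟨q, hq, rfl⟩ | hc
        · exact hy q hq ((hlift q y).mp hap)
        · exact hcavoid y p hc hap
    have hstabX : ∀ x ∈ shiftSpace 𝓕X, stab x = N := by
      intro x hx
      have hc := hXconst x hx
      set y : (G ⧸ N) → A := fun k => x k.out with hy
      have hxy : x = fun h : G => y ↑h := funext fun g => (factor_out x hc g).symm
      have hyY : y ∈ shiftSpace 𝓕 := (hmemX y).mp (hxy ▸ hx)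
      have hbot := hYap y hyY
      ext g
      constructor
      · intro hg
        have hg' : shiftAct g (fun h : G => y ↑h) = (fun h : G => y ↑h) := by
          rw [← hxy]; exact hg
        have hm : (↑g : G ⧸ N) ∈ stab y := (shiftAct_quot_iff y g).mp hg'
        rw [hbot] at hm
        exact (QuotientGroup.eq_one_iff g).mp (Subgroup.mem_bot.mp hm)
      · intro hg
        show shiftAct g x = x
        rw [hxy]
        refine (shiftAct_quot_iff y g).mpr ?_
        rw [(QuotientGroup.eq_one_iff g).mpr hg]
        funext k
        simp [shiftAct]
    obtain ⟨y₀, hy₀⟩ := hYne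
    have hx₀ : (fun h : G => y₀ ↑h) ∈ shiftSpace 𝓕X := (hmemX y₀).mpr hy₀
    refine ⟨A, hAfin, hAne, shiftSpace 𝓕X, ⟨𝓕X, (h𝓕fin.image lift).union h𝓒fin, rfl⟩,
      ⟨_, hx₀⟩, ?_⟩
    refine Set.eq_singleton_iff_unique_mem.mpr ⟨⟨_, hx₀, hstabX _ hx₀⟩, ?_⟩
    rintro z ⟨x, hx, rfl⟩
    exact hstabX x hx
end

section
/- Every nonempty weakly aperiodic ℤ²-SFT is strongly aperiodic: if X ⊆ A^{ℤ²} is a nonempty SFT in which every configuration has infinite orbit under the shift action (equivalently, no configuration has a finite-index stabilizer), then stab(x) = {(0,0)} for every x ∈ X. -/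
section Z2SymbolicDynamics

variable {A : Type}

/-- The shift action of `ℤ²` on configurations: `(v · x) u = x (u - v)`. -/
def shift2 (v : ℤ × ℤ) (x : ℤ × ℤ → A) : ℤ × ℤ → A := fun u => x (u - v)

/-- A pattern over `ℤ²`: a finite support together with a map assigning letters. -/
abbrev Pattern2 (A : Type) := Finset (ℤ × ℤ) × (ℤ × ℤ → A)

/-- A pattern appears in a configuration if some translate of the configuration agrees
with the pattern on its support. -/
def Appears2 (p : Pattern2 A) (x : ℤ × ℤ → A) : Prop :=
  ∃ g : ℤ × ℤ, ∀ h ∈ p.1, x (g + h) = p.2 h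

/-- The set of configurations avoiding every pattern in `𝓕`. -/
def shiftSpace2 (𝓕 : Set (Pattern2 A)) : Set (ℤ × ℤ → A) :=
  {x | ∀ p ∈ 𝓕, ¬ Appears2 p x}

/-- A `ℤ²`-subshift of finite type. -/
def IsSFT2 (X : Set (ℤ × ℤ → A)) : Prop :=
  ∃ 𝓕 : Set (Pattern2 A), 𝓕.Finite ∧ X = shiftSpace2 𝓕

/-- The stabilizer of a configuration under the `ℤ²`-shift action. -/
def stab2 (x : ℤ × ℤ → A) : AddSubgroup (ℤ × ℤ) where
  carrier := {v | shift2 v x = x}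
  zero_mem' := by
    show shift2 0 x = x
    funext u; simp [shift2]
  add_mem' := by
    intro a b ha hb
    have ha' : shift2 a x = x := ha
    have hb' : shift2 b x = x := hb
    show shift2 (a + b) x = x
    funext u
    have h1 := congrFun ha' (u - b)
    have h2 := congrFun hb' u
    simp only [shift2] at h1 h2 ⊢
    rw [show u - (a + b) = u - b - a by ring, h1, h2]
  neg_mem' := by
    intro a ha
    have ha' : shift2 a x = x := ha
    show shift2 (-a) x = x
    funext u
    have h1 := congrFun ha' (u + a)
    simp only [shift2] at h1 ⊢
    rw [show u - -a = u + a by ring, ← h1, add_sub_cancel_right]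

/-- A subshift is weakly aperiodic if every configuration has an infinite orbit. -/
def WeaklyAperiodic2 (X : Set (ℤ × ℤ → A)) : Prop :=
  ∀ x ∈ X, (Set.range fun v => shift2 v x).Infinite

/-- A subshift is strongly aperiodic if every configuration has trivial stabilizer. -/
def StronglyAperiodic2 (X : Set (ℤ × ℤ → A)) : Prop := ∀ x ∈ X, stab2 x = ⊥

end Z2SymbolicDynamics

/-- A family of subgroups of `ℤ²` is realizable if it is the set of stabilizers of a
nonempty `ℤ²`-SFT over some nonempty finite alphabet. -/
def Realizable2 (𝒢 : Set (AddSubgroup (ℤ × ℤ))) : Prop :=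
  ∃ (A : Type) (_ : Finite A) (_ : Nonempty A) (X : Set (ℤ × ℤ → A)),
    IsSFT2 X ∧ X.Nonempty ∧ stab2 '' X = 𝒢

/-- The subgroup `pℤ × qℤ` of `ℤ²`. -/
def lattice (p q : ℤ) : AddSubgroup (ℤ × ℤ) :=
  (AddSubgroup.zmultiples p).prod (AddSubgroup.zmultiples q)



section Helpers
variable {A : Type}

lemma shift2_add (v w : ℤ × ℤ) (x : ℤ × ℤ → A) :
    shift2 (v + w) x = shift2 v (shift2 w x) := by
  funext u
  simp only [shift2]
  rw [sub_sub]

lemma horiz_mod (z : ℤ × ℤ → A) (g : ℤ)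
    (hper : shift2 (g, 0) z = z) (i j : ℤ) : z (i, j) = z (i % g, j) := by
  have hmem : ((g, 0) : ℤ × ℤ) ∈ stab2 z := hper
  have h2 : shift2 ((i / g) • ((g : ℤ), (0 : ℤ))) z = z := (stab2 z).zsmul_mem hmem (i / g)
  have h3 := congrFun h2 (i, j)
  simp only [shift2] at h3
  rw [← h3]
  congr 1
  have he : (i / g) • ((g : ℤ), (0 : ℤ)) = (g * (i / g), 0) := by
    simp [Prod.ext_iff, zsmul_eq_mul, mul_comm]
  rw [he]
  simp [Prod.ext_iff, Int.emod_def]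

lemma patMap_def : True := trivial

def patMap (φ : (ℤ × ℤ) ≃+ (ℤ × ℤ)) (p : Pattern2 A) : Pattern2 A :=
  (p.1.image (fun h => φ.symm h), p.2 ∘ φ)

lemma comp_mem_shiftSpace (φ : (ℤ × ℤ) ≃+ (ℤ × ℤ)) {𝓕 : Set (Pattern2 A)} {x : ℤ × ℤ → A}
    (hx : x ∈ shiftSpace2 𝓕) : (x ∘ φ) ∈ shiftSpace2 (patMap φ '' 𝓕) := by
  rintro p' ⟨p, hp, rfl⟩ ⟨w, hw⟩
  refine hx p hp ⟨φ w, fun h hh => ?_⟩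
  have := hw (φ.symm h) (Finset.mem_image_of_mem _ hh)
  simpa [patMap, Function.comp, map_add] using this

lemma patMap_patMap_symm (φ : (ℤ × ℤ) ≃+ (ℤ × ℤ)) (p : Pattern2 A) :
    patMap φ (patMap φ.symm p) = p := by
  unfold patMap
  refine Prod.ext ?_ ?_
  · simp [Finset.image_image, Function.comp]
  · funext h
    simp

lemma shift2_comp (φ : (ℤ × ℤ) ≃+ (ℤ × ℤ)) (v : ℤ × ℤ) (x : ℤ × ℤ → A) :
    shift2 v (x ∘ φ) = (shift2 (φ v) x) ∘ φ := by
  funext u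
  simp [shift2, Function.comp, map_sub]

end Helpers

section Main
variable {A : Type}

lemma doubly_periodic [Finite A] (𝓕 : Set (Pattern2 A)) (hF : 𝓕.Finite)
    (z : ℤ × ℤ → A) (hz : z ∈ shiftSpace2 𝓕) (g : ℤ) (hg : 0 < g)
    (hper : shift2 (g, 0) z = z) :
    ∃ y ∈ shiftSpace2 𝓕, ∃ m : ℤ, 0 < m ∧ shift2 (g, 0) y = y ∧ shift2 (0, m) y = y := by
  classical
  set N : ℕ := hF.toFinset.sup (fun p => p.1.sup (fun h => h.2.natAbs)) with hNdef
  have hN : ∀ p ∈ 𝓕, ∀ h ∈ p.1, h.2.natAbs ≤ N := by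
    intro p hp h hh
    exact le_trans (Finset.le_sup (f := fun h => h.2.natAbs) hh)
      (Finset.le_sup (f := fun p => p.1.sup fun h => h.2.natAbs) (hF.mem_toFinset.2 hp))
  obtain ⟨k, l, hkl, hB⟩ :
      ∃ k l : ℕ, k < l ∧
        (fun (s : Fin (2*N+1)) (i : Fin g.toNat) => z ((i.1 : ℤ), (k : ℤ) + (s.1 : ℤ)))
          = fun s i => z ((i.1 : ℤ), (l : ℤ) + (s.1 : ℤ)) := by
    obtain ⟨a, b, hab, he⟩ := Finite.exists_ne_map_eq_of_infinite
      (fun (n : ℕ) => fun (s : Fin (2*N+1)) (i : Fin g.toNat) => z ((i.1 : ℤ), (n : ℤ) + (s.1 : ℤ)))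
    rcases hab.lt_or_gt with h | h
    · exact ⟨a, b, h, he⟩
    · exact ⟨b, a, h, he.symm⟩
  set m : ℤ := (l : ℤ) - (k : ℤ) with hmdef
  have hm : 0 < m := by omega
  have blk : ∀ i s : ℤ, 0 ≤ s → s ≤ 2 * N → z (i, (k : ℤ) + s) = z (i, (k : ℤ) + s + m) := by
    intro i s hs0 hs1
    have hik : 0 ≤ i % g := Int.emod_nonneg i (ne_of_gt hg)
    have hik2 : i % g < g := Int.emod_lt_of_pos i hg
    have hlt : (i % g).toNat < g.toNat := by omega
    have hslt : s.toNat < 2*N+1 := by omega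
    have hthis := congrFun (congrFun hB ⟨s.toNat, hslt⟩) ⟨(i % g).toNat, hlt⟩
    simp only [Int.toNat_of_nonneg hik, Int.toNat_of_nonneg hs0] at hthis
    calc z (i, (k : ℤ) + s) = z (i % g, (k : ℤ) + s) := horiz_mod z g hper i _
      _ = z (i % g, (l : ℤ) + s) := hthis
      _ = z (i, (l : ℤ) + s) := (horiz_mod z g hper i _).symm
      _ = z (i, (k : ℤ) + s + m) := by rw [show (l : ℤ) + s = (k : ℤ) + s + m by omega]
  have key : ∀ n : ℕ, ∀ c : ℤ, c = n → c ≤ 2*N + m → ∀ i : ℤ,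
      z (i, (k : ℤ) + c % m) = z (i, (k : ℤ) + c) := by
    intro n
    induction n using Nat.strong_induction_on with
    | _ n ih =>
      intro c hc hcle i
      by_cases h : c < m
      · rw [Int.emod_eq_of_lt (by omega) h]
      · push_neg at h
        have h1 : c % m = (c - m) % m := (Int.sub_emod_right c m).symm
        have h2 := ih (c - m).toNat (by omega) (c - m) (by omega) (by omega) i
        rw [h1, h2, blk i (c - m) (by omega) (by omega),
          show (k : ℤ) + (c - m) + m = (k : ℤ) + c by ring]
  refine ⟨fun u => z (u.1, (k : ℤ) + (u.2 - k) % m), ?_, m, hm, ?_, ?_⟩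
  · rintro p hp ⟨w, hw⟩
    apply hz p hp
    set q : ℤ := (w.2 - N - k) % m with hq
    refine ⟨(w.1, (k : ℤ) + q + N), fun h hh => ?_⟩
    have hNa := hN p hp h hh
    have hq0 : 0 ≤ q := Int.emod_nonneg _ (ne_of_gt hm)
    have hq1 : q < m := Int.emod_lt_of_pos _ hm
    have hcm : (q + N + h.2) % m = (w.2 + h.2 - k) % m := by
      calc (q + N + h.2) % m = (q % m + (N + h.2)) % m := by
            rw [hq, Int.emod_emod_of_dvd _ dvd_rfl]; ring_nf
        _ = ((w.2 - N - k) % m + (N + h.2)) % m := by rw [hq, Int.emod_emod_of_dvd _ dvd_rfl]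
        _ = ((w.2 - N - k) + (N + h.2)) % m := by rw [Int.add_emod, Int.emod_emod_of_dvd _ dvd_rfl, ← Int.add_emod]
        _ = (w.2 + h.2 - k) % m := by ring_nf
    have hk := key (q + N + h.2).toNat (q + N + h.2) (by omega) (by omega) (w.1 + h.1)
    have hwh := hw h hh
    simp only [Prod.fst_add, Prod.snd_add] at hwh
    show z ((w.1, (k : ℤ) + q + N) + h) = p.2 h
    rw [show ((w.1, (k : ℤ) + q + N) + h) = (w.1 + h.1, (k : ℤ) + (q + N + h.2)) by
      simp [Prod.ext_iff]; ring]
    rw [← hk, hcm]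
    convert hwh using 3
  · funext u
    simp only [shift2]
    have h1 : (u - ((g : ℤ), (0 : ℤ))).1 = u.1 - g := rfl
    have h2 : (u - ((g : ℤ), (0 : ℤ))).2 = u.2 := by
      show u.2 - 0 = u.2; ring
    rw [h1, h2]
    have hthis := congrFun hper (u.1, (k : ℤ) + (u.2 - k) % m)
    simp only [shift2] at hthis
    convert hthis using 2
    show _ = ((u.1, (k : ℤ) + (u.2 - k) % m) - ((g : ℤ), (0 : ℤ)))
    simp [Prod.ext_iff]
  · funext u
    simp only [shift2]
    have h1 : (u - ((0 : ℤ), m)).1 = u.1 := by show u.1 - 0 = u.1; ring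
    have h2 : (u - ((0 : ℤ), m)).2 = u.2 - m := rfl
    rw [h1, h2, show u.2 - m - (k : ℤ) = (u.2 - k) - m by ring, Int.sub_emod_right]

end Main

section Main2
variable {A : Type}

lemma orbit_finite (y : ℤ × ℤ → A) (g m : ℤ) (hg : 0 < g) (hm : 0 < m)
    (h1 : shift2 (g, 0) y = y) (h2 : shift2 (0, m) y = y) :
    (Set.range fun v => shift2 v y).Finite := by
  apply Set.Finite.subset (Set.Finite.image (fun v => shift2 v y)
    ((Set.finite_Ico (0 : ℤ) g).prod (Set.finite_Ico (0 : ℤ) m)))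
  rintro _ ⟨v, rfl⟩
  refine ⟨(v.1 % g, v.2 % m), ?_, ?_⟩
  · constructor
    · exact ⟨Int.emod_nonneg _ (ne_of_gt hg), Int.emod_lt_of_pos _ hg⟩
    · exact ⟨Int.emod_nonneg _ (ne_of_gt hm), Int.emod_lt_of_pos _ hm⟩
  · have hmem1 : ((g, 0) : ℤ × ℤ) ∈ stab2 y := h1
    have hmem2 : ((0, m) : ℤ × ℤ) ∈ stab2 y := h2
    have hst : shift2 ((v.1 / g) • ((g : ℤ), (0 : ℤ)) + (v.2 / m) • ((0 : ℤ), m)) y = y :=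
      (stab2 y).add_mem ((stab2 y).zsmul_mem hmem1 _) ((stab2 y).zsmul_mem hmem2 _)
    have hdecomp : v = (v.1 % g, v.2 % m) + ((v.1 / g) • ((g : ℤ), (0 : ℤ)) + (v.2 / m) • ((0 : ℤ), m)) := by
      have e1 : v.1 % g + (v.1 / g * g + v.2 / m * 0) = v.1 := by
        rw [mul_zero, add_zero, mul_comm]; exact Int.emod_add_mul_ediv v.1 g
      have e2 : v.2 % m + (v.1 / g * 0 + v.2 / m * m) = v.2 := by
        rw [mul_zero, zero_add, mul_comm]; exact Int.emod_add_mul_ediv v.2 m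
      simp only [Prod.ext_iff, Prod.fst_add, Prod.snd_add, Prod.smul_fst, Prod.smul_snd, smul_eq_mul]
      omega
    calc shift2 ((v.1 % g, v.2 % m)) y
        = shift2 ((v.1 % g, v.2 % m)) (shift2 _ y) := by rw [hst]
      _ = shift2 v y := by rw [← shift2_add, ← hdecomp]

def mkEquiv (p q a' b' : ℤ) (hpq : p * a' + q * b' = 1) : (ℤ × ℤ) ≃+ (ℤ × ℤ) where
  toFun u := (p * u.1 + q * u.2, -b' * u.1 + a' * u.2)
  invFun u := (a' * u.1 - q * u.2, b' * u.1 + p * u.2)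
  left_inv u := by
    refine Prod.ext ?_ ?_ <;> dsimp only
    · linear_combination u.1 * hpq
    · linear_combination u.2 * hpq
  right_inv u := by
    refine Prod.ext ?_ ?_ <;> dsimp only
    · linear_combination u.1 * hpq
    · linear_combination u.2 * hpq
  map_add' u w := by
    refine Prod.ext ?_ ?_ <;> dsimp only [Prod.fst_add, Prod.snd_add] <;> ring

end Main2

/-- Every nonempty weakly aperiodic `ℤ²`-SFT is strongly aperiodic. -/
theorem statement4 {A : Type} [Finite A] [Nonempty A] (X : Set (ℤ × ℤ → A))
    (hSFT : IsSFT2 X) (hne : X.Nonempty) (hweak : WeaklyAperiodic2 X) :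
    StronglyAperiodic2 X := by
  intro x hx
  rw [AddSubgroup.eq_bot_iff_forall]
  intro v hv
  by_contra hv0
  obtain ⟨𝓕, hFfin, rfl⟩ := hSFT
  have hvx : shift2 v x = x := hv
  obtain ⟨a, b⟩ := v
  -- Bezout / change of coordinates
  set g : ℤ := (Int.gcd a b : ℤ) with hgdef
  have hg : 0 < g := by
    have : Int.gcd a b ≠ 0 := by
      intro h
      obtain ⟨rfl, rfl⟩ := Int.gcd_eq_zero_iff.mp h
      exact hv0 rfl
    omega
  have hbez : g = a * Int.gcdA a b + b * Int.gcdB a b := Int.gcd_eq_gcd_ab a b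
  set p : ℤ := Int.gcdA a b
  set q : ℤ := Int.gcdB a b
  have hda : g ∣ a := Int.gcd_dvd_left a b
  have hdb : g ∣ b := Int.gcd_dvd_right a b
  set a' : ℤ := a / g with ha'def
  set b' : ℤ := b / g with hb'def
  have ha : g * a' = a := Int.mul_ediv_cancel' hda
  have hb : g * b' = b := Int.mul_ediv_cancel' hdb
  have hkey : p * a' + q * b' = 1 := by
    have h1 : g * (p * a' + q * b') = g * 1 := by
      rw [mul_one]
      calc g * (p * a' + q * b') = (g * a') * p + (g * b') * q := by ring
        _ = a * p + b * q := by rw [ha, hb]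
        _ = g := by rw [hbez]
    exact mul_left_cancel₀ (ne_of_gt hg) h1
  set φ : (ℤ × ℤ) ≃+ (ℤ × ℤ) := mkEquiv p q a' b' hkey with hφdef
  have hφv : φ (a, b) = (g, 0) := by
    refine Prod.ext ?_ ?_
    · show p * a + q * b = g
      rw [hbez]; ring
    · show -b' * a + a' * b = 0
      rw [← ha, ← hb]; ring
  have hφsymm : φ.symm (g, 0) = (a, b) := by rw [← hφv, AddEquiv.symm_apply_apply]
  -- conjugated configuration
  set z : ℤ × ℤ → A := x ∘ φ.symm with hzdef
  have hz : z ∈ shiftSpace2 (patMap φ.symm '' 𝓕) := comp_mem_shiftSpace φ.symm hx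
  have hzper : shift2 (g, 0) z = z := by
    rw [hzdef]
    have := shift2_comp φ.symm ((g : ℤ), (0 : ℤ)) x
    rw [this, hφsymm, hvx]
  obtain ⟨y, hy, m, hm, hy1, hy2⟩ :=
    doubly_periodic (patMap φ.symm '' 𝓕) (hFfin.image _) z hz g hg hzper
  -- back to original coordinates
  set x' : ℤ × ℤ → A := y ∘ φ with hx'def
  have hx' : x' ∈ shiftSpace2 𝓕 := by
    have h := comp_mem_shiftSpace φ hy
    have himg : patMap φ '' (patMap φ.symm '' 𝓕) = 𝓕 := by
      rw [← Set.image_comp]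
      have : (patMap φ ∘ patMap φ.symm : Pattern2 A → Pattern2 A) = id := by
        funext pp
        exact patMap_patMap_symm φ pp
      rw [this, Set.image_id]
    rwa [himg] at h
  -- x' has finite orbit
  have hfin : (Set.range fun w => shift2 w x').Finite := by
    have horb := orbit_finite y g m hg hm hy1 hy2
    apply Set.Finite.subset (horb.image (fun c => c ∘ φ))
    rintro _ ⟨w, rfl⟩
    exact ⟨shift2 (φ w) y, ⟨φ w, rfl⟩, (shift2_comp φ w y).symm⟩
  exact hweak x' hx' hfin
end

section
/- Let G be a finitely generated group and H a subgroup of G. There exists a nonempty finite alphabet A and a nonempty G-subshift X ⊆ A^G (not required to be of finite type) with stab(x) = H for every x ∈ X if and only if H is normal in G. -/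
section LLL

variable {V : Type} [Fintype V] [DecidableEq V]

def Det (A : Finset (V → Bool)) (W : Finset V) : Prop :=
  ∀ f g : V → Bool, (∀ v ∈ W, f v = g v) → f ∈ A → g ∈ A

lemma det_avoid {ι : Type} [DecidableEq ι] (J : Finset ι) (A : ι → Finset (V → Bool))
    (W : ι → Finset V) (h : ∀ j ∈ J, Det (A j) (W j)) :
    Det (Finset.univ.filter (fun f => ∀ j ∈ J, f ∉ A j)) (J.biUnion W) := by
  intro f g hagree hf
  simp only [Finset.mem_filter, Finset.mem_univ, true_and] at hf ⊢
  intro j hj hg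
  exact hf j hj (h j hj g f
    (fun v hv => (hagree v (Finset.mem_biUnion.mpr ⟨j, hj, hv⟩)).symm) hg)

lemma indep_card (A B : Finset (V → Bool)) (D E : Finset V)
    (hA : Det A D) (hB : Det B E) (hDE : Disjoint D E) :
    ((A ∩ B).card) * 2 ^ (Fintype.card V) = A.card * B.card := by
  classical
  have hfun : Fintype.card (V → Bool) = 2 ^ (Fintype.card V) := by
    rw [Fintype.card_fun, Fintype.card_bool]
  have key : ((A ∩ B) ×ˢ (Finset.univ : Finset (V → Bool))).card = (A ×ˢ B).card := by
    refine Finset.card_bij'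
      (fun p _ => (fun v => if v ∈ D then p.1 v else p.2 v,
        fun v => if v ∈ D then p.2 v else p.1 v))
      (fun p _ => (fun v => if v ∈ D then p.1 v else p.2 v,
        fun v => if v ∈ D then p.2 v else p.1 v)) ?_ ?_ ?_ ?_
    · intro p hp
      simp only [Finset.mem_product, Finset.mem_inter] at hp
      obtain ⟨⟨hpA, hpB⟩, -⟩ := hp
      simp only [Finset.mem_product]
      constructor
      · exact hA p.1 _ (fun v hv => by simp [if_pos hv]) hpA
      · refine hB p.1 _ (fun v hv => ?_) hpB
        have hvD : v ∉ D := fun hvD => (Finset.disjoint_left.mp hDE) hvD hv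
        simp [if_neg hvD]
    · intro p hp
      simp only [Finset.mem_product] at hp
      obtain ⟨hpA, hpB⟩ := hp
      simp only [Finset.mem_product, Finset.mem_inter, Finset.mem_univ, and_true]
      constructor
      · exact hA p.1 _ (fun v hv => by simp [if_pos hv]) hpA
      · refine hB p.2 _ (fun v hv => ?_) hpB
        have hvD : v ∉ D := fun hvD => (Finset.disjoint_left.mp hDE) hvD hv
        simp [if_neg hvD]
    · intro p hp
      refine Prod.ext ?_ ?_ <;> funext v <;> by_cases hv : v ∈ D <;> simp [hv]
    · intro p hp
      refine Prod.ext ?_ ?_ <;> funext v <;> by_cases hv : v ∈ D <;> simp [hv]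
  rw [Finset.card_product, Finset.card_product, Finset.card_univ, hfun] at key
  rw [key]

theorem lll {ι : Type} [DecidableEq ι] (E : Finset ι) (A : ι → Finset (V → Bool))
    (W : ι → Finset V) (x : ι → ℝ)
    (hdet : ∀ i ∈ E, Det (A i) (W i))
    (hx0 : ∀ i ∈ E, 0 < x i) (hx1 : ∀ i ∈ E, x i < 1)
    (hcond : ∀ i ∈ E, ((A i).card : ℝ) ≤ x i * 2 ^ (Fintype.card V) *
      ∏ j ∈ E.filter (fun j => j ≠ i ∧ ¬ Disjoint (W j) (W i)), (1 - x j)) :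
    ∃ f : V → Bool, ∀ i ∈ E, f ∉ A i := by
  classical
  set CS : Finset ι → Finset (V → Bool) :=
    fun J => Finset.univ.filter (fun f => ∀ j ∈ J, f ∉ A j) with hCS
  have hCSmono : ∀ {J J' : Finset ι}, J ⊆ J' → CS J' ⊆ CS J := by
    intro J J' hJJ f hf
    simp only [hCS, Finset.mem_filter, Finset.mem_univ, true_and] at hf ⊢
    exact fun j hj => hf j (hJJ hj)
  have hCSinsert : ∀ (a : ι) (J : Finset ι), CS (insert a J) = CS J \ A a := by
    intro a J
    ext f
    simp only [hCS, Finset.mem_filter, Finset.mem_univ, true_and, Finset.mem_sdiff,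
      Finset.mem_insert]
    constructor
    · intro h
      exact ⟨fun j hj => h j (Or.inr hj), h a (Or.inl rfl)⟩
    · rintro ⟨h1, h2⟩ j hj
      rcases hj with rfl | hj
      · exact h2
      · exact h1 j hj
  have hcard_sdiff : ∀ (s t : Finset (V → Bool)),
      ((s \ t).card : ℝ) = s.card - (t ∩ s).card := by
    intro s t
    have := Finset.card_inter_add_card_sdiff s t
    have h2 : (s ∩ t).card = (t ∩ s).card := by rw [Finset.inter_comm]
    push_cast [← this, h2]
    ring
  have pow_pos' : (0:ℝ) < 2 ^ (Fintype.card V) := by positivity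
  have main : ∀ k : ℕ, ∀ J : Finset ι, J ⊆ E → J.card ≤ k →
      (0 < (CS J).card ∧
        ∀ i ∈ E, ((A i ∩ CS J).card : ℝ) ≤ x i * (CS J).card) := by
    intro k
    induction k with
    | zero =>
      intro J hJE hJc
      have hJ : J = ∅ := Finset.card_eq_zero.mp (Nat.le_zero.mp hJc)
      subst hJ
      have hCSempty : CS ∅ = Finset.univ := by
        ext f; simp [hCS]
      have hcu : ((Finset.univ : Finset (V → Bool)).card : ℝ) = 2 ^ (Fintype.card V) := by
        rw [Finset.card_univ, Fintype.card_fun, Fintype.card_bool]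
        push_cast
        rfl
      refine ⟨by rw [hCSempty, Finset.card_univ]; exact Fintype.card_pos, ?_⟩
      intro i hi
      rw [hCSempty, hcu, Finset.inter_univ]
      calc ((A i).card : ℝ)
          ≤ x i * 2 ^ (Fintype.card V) *
            ∏ j ∈ E.filter (fun j => j ≠ i ∧ ¬ Disjoint (W j) (W i)), (1 - x j) := hcond i hi
        _ ≤ x i * 2 ^ (Fintype.card V) * 1 := by
            apply mul_le_mul_of_nonneg_left
            · apply Finset.prod_le_one
              · intro j hj
                have hjE := (Finset.mem_filter.mp hj).1
                linarith [hx1 j hjE]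
              · intro j hj
                have hjE := (Finset.mem_filter.mp hj).1
                linarith [hx0 j hjE]
            · exact mul_nonneg (le_of_lt (hx0 i hi)) (by positivity)
        _ = x i * 2 ^ (Fintype.card V) := mul_one _
    | succ k ih =>
      intro J hJE hJc
      rcases Nat.lt_or_ge J.card (k+1) with hlt | hge
      · exact ih J hJE (by omega)
      have hJcard : J.card = k + 1 := le_antisymm hJc hge
      -- positivity
      have hpos : 0 < (CS J).card := by
        obtain ⟨j₀, hj₀⟩ := Finset.card_pos.mp (by omega : 0 < J.card)
        have hJeq : J = insert j₀ (J.erase j₀) := (Finset.insert_erase hj₀).symm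
        have herase : (J.erase j₀).card ≤ k := by
          rw [Finset.card_erase_of_mem hj₀, hJcard]; omega
        obtain ⟨hpos', hbound'⟩ := ih (J.erase j₀) (fun j hj => hJE (Finset.erase_subset _ _ hj)) herase
        have : ((CS J).card : ℝ) ≥ (1 - x j₀) * (CS (J.erase j₀)).card := by
          have e : CS J = CS (J.erase j₀) \ A j₀ := by
            conv_lhs => rw [hJeq]
            rw [hCSinsert]
          rw [e, hcard_sdiff]
          have hb := hbound' j₀ (hJE hj₀)
          linarith [hb]
        have h1x : 0 < 1 - x j₀ := by linarith [hx1 j₀ (hJE hj₀)]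
        have : (0:ℝ) < (CS J).card := by
          have : (0:ℝ) < (1 - x j₀) * (CS (J.erase j₀)).card := by
            apply mul_pos h1x
            exact_mod_cast hpos'
          linarith
        exact_mod_cast this
      refine ⟨hpos, ?_⟩
      intro i hi
      by_cases hiJ : i ∈ J
      · have hempty : A i ∩ CS J = ∅ := by
          apply Finset.eq_empty_of_forall_notMem
          intro f hf
          obtain ⟨hfA, hfCS⟩ := Finset.mem_inter.mp hf
          exact (Finset.mem_filter.mp hfCS).2 i hiJ hfA
        rw [hempty]
        simp only [Finset.card_empty, Nat.cast_zero]
        apply mul_nonneg (le_of_lt (hx0 i hi))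
        exact Nat.cast_nonneg _
      -- main case
      set J₁ : Finset ι := J.filter (fun j => ¬ Disjoint (W j) (W i)) with hJ₁
      set J₂ : Finset ι := J \ J₁ with hJ₂
      have hJ₁J : J₁ ⊆ J := Finset.filter_subset _ _
      have hJ₂J : J₂ ⊆ J := Finset.sdiff_subset
      have hunion : J₂ ∪ J₁ = J := Finset.sdiff_union_of_subset hJ₁J
      -- independence
      have hdet2 : Det (CS J₂) (J₂.biUnion W) :=
        det_avoid J₂ A W (fun j hj => hdet j (hJE (hJ₂J hj)))
      have hdisj : Disjoint (W i) (J₂.biUnion W) := by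
        rw [Finset.disjoint_biUnion_right]
        intro j hj
        have hj' : j ∈ J ∧ ¬ ¬ Disjoint (W j) (W i) := by
          have := Finset.mem_sdiff.mp hj
          refine ⟨this.1, fun hc => this.2 ?_⟩
          rw [hJ₁]
          exact Finset.mem_filter.mpr ⟨this.1, hc⟩
        exact (not_not.mp hj'.2).symm
      have hindep : ((A i ∩ CS J₂).card : ℝ) * 2 ^ (Fintype.card V)
          = (A i).card * (CS J₂).card := by
        have := indep_card (A i) (CS J₂) (W i) (J₂.biUnion W) (hdet i hi) hdet2 hdisj
        exact_mod_cast congrArg (Nat.cast : ℕ → ℝ) this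
      -- peeling
      have claim3 : ∀ S : Finset ι, S ⊆ J₁ →
          (∏ j ∈ S, (1 - x j)) * ((CS J₂).card : ℝ) ≤ ((CS (J₂ ∪ S)).card : ℝ) := by
        intro S
        induction S using Finset.induction_on with
        | empty =>
          intro _
          rw [Finset.prod_empty, one_mul, Finset.union_empty]
        | @insert a S ha ihS =>
          intro hSJ₁
          have haJ₁ : a ∈ J₁ := hSJ₁ (Finset.mem_insert_self a S)
          have hSsub : S ⊆ J₁ := fun j hj => hSJ₁ (Finset.mem_insert_of_mem hj)
          have haE : a ∈ E := hJE (hJ₁J haJ₁)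
          have hun : J₂ ∪ insert a S = insert a (J₂ ∪ S) := by rw [Finset.union_insert]
          have hsubE : J₂ ∪ S ⊆ E := by
            intro j hj
            rcases Finset.mem_union.mp hj with h | h
            · exact hJE (hJ₂J h)
            · exact hJE (hJ₁J (hSsub h))
          have hcardle : (J₂ ∪ S).card ≤ k := by
            have hsub' : J₂ ∪ S ⊆ J.erase a := by
              intro j hj
              rcases Finset.mem_union.mp hj with h | h
              · refine Finset.mem_erase.mpr ⟨?_, hJ₂J h⟩
                rintro rfl
                exact (Finset.mem_sdiff.mp h).2 haJ₁
              · refine Finset.mem_erase.mpr ⟨?_, hJ₁J (hSsub h)⟩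
                rintro rfl
                exact ha h
            calc (J₂ ∪ S).card ≤ (J.erase a).card := Finset.card_le_card hsub'
              _ ≤ k := by rw [Finset.card_erase_of_mem (hJ₁J haJ₁), hJcard]; omega
          obtain ⟨hpos2, hbound2⟩ := ih (J₂ ∪ S) hsubE hcardle
          have e : CS (J₂ ∪ insert a S) = CS (J₂ ∪ S) \ A a := by rw [hun, hCSinsert]
          have h1xa : (0:ℝ) ≤ 1 - x a := by linarith [hx1 a haE]
          have hxa := hbound2 a haE
          rw [e, hcard_sdiff, Finset.prod_insert ha]
          have ih' := ihS hSsub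
          calc (1 - x a) * (∏ j ∈ S, (1 - x j)) * ((CS J₂).card : ℝ)
              = (1 - x a) * ((∏ j ∈ S, (1 - x j)) * ((CS J₂).card : ℝ)) := by ring
            _ ≤ (1 - x a) * ((CS (J₂ ∪ S)).card : ℝ) := mul_le_mul_of_nonneg_left ih' h1xa
            _ ≤ ((CS (J₂ ∪ S)).card : ℝ) - ((A a ∩ CS (J₂ ∪ S)).card : ℝ) := by
                linarith [hxa]
      -- final chain
      have hJ₁sub : J₁ ⊆ E.filter (fun j => j ≠ i ∧ ¬ Disjoint (W j) (W i)) := by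
        intro j hj
        have hjJ := hJ₁J hj
        refine Finset.mem_filter.mpr ⟨hJE hjJ, ?_, (Finset.mem_filter.mp hj).2⟩
        rintro rfl
        exact hiJ hjJ
      have hprodJ₁nonneg : (0:ℝ) ≤ ∏ j ∈ J₁, (1 - x j) := by
        apply Finset.prod_nonneg
        intro j hj
        linarith [hx1 j (hJE (hJ₁J hj))]
      have hprod_le : ∏ j ∈ E.filter (fun j => j ≠ i ∧ ¬ Disjoint (W j) (W i)), (1 - x j)
          ≤ ∏ j ∈ J₁, (1 - x j) := by
        rw [← Finset.prod_sdiff hJ₁sub]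
        have h1 : ∏ j ∈ (E.filter (fun j => j ≠ i ∧ ¬ Disjoint (W j) (W i))) \ J₁, (1 - x j) ≤ 1 := by
          apply Finset.prod_le_one
          · intro j hj
            have hjE := (Finset.mem_filter.mp (Finset.mem_sdiff.mp hj).1).1
            linarith [hx1 j hjE]
          · intro j hj
            have hjE := (Finset.mem_filter.mp (Finset.mem_sdiff.mp hj).1).1
            linarith [hx0 j hjE]
        exact mul_le_of_le_one_left hprodJ₁nonneg h1
      have claim3' := claim3 J₁ (subset_refl _)
      rw [hunion] at claim3'
      have step1 : ((A i ∩ CS J).card : ℝ) ≤ ((A i ∩ CS J₂).card : ℝ) := by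
        have := Finset.card_le_card (Finset.inter_subset_inter (subset_refl (A i)) (hCSmono hJ₂J))
        exact_mod_cast this
      have final : ((A i ∩ CS J).card : ℝ) * 2 ^ (Fintype.card V)
          ≤ x i * ((CS J).card : ℝ) * 2 ^ (Fintype.card V) := by
        calc ((A i ∩ CS J).card : ℝ) * 2 ^ (Fintype.card V)
            ≤ ((A i ∩ CS J₂).card : ℝ) * 2 ^ (Fintype.card V) :=
              mul_le_mul_of_nonneg_right step1 (le_of_lt pow_pos')
          _ = ((A i).card : ℝ) * ((CS J₂).card : ℝ) := hindep
          _ ≤ (x i * 2 ^ (Fintype.card V) *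
                ∏ j ∈ E.filter (fun j => j ≠ i ∧ ¬ Disjoint (W j) (W i)), (1 - x j)) *
                ((CS J₂).card : ℝ) :=
              mul_le_mul_of_nonneg_right (hcond i hi) (Nat.cast_nonneg _)
          _ ≤ (x i * 2 ^ (Fintype.card V) * ∏ j ∈ J₁, (1 - x j)) * ((CS J₂).card : ℝ) := by
              apply mul_le_mul_of_nonneg_right _ (Nat.cast_nonneg _)
              apply mul_le_mul_of_nonneg_left hprod_le
              exact mul_nonneg (le_of_lt (hx0 i hi)) (le_of_lt pow_pos')
          _ = (x i * ((∏ j ∈ J₁, (1 - x j)) * ((CS J₂).card : ℝ))) * 2 ^ (Fintype.card V) := by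
              ring
          _ ≤ (x i * ((CS J).card : ℝ)) * 2 ^ (Fintype.card V) := by
              apply mul_le_mul_of_nonneg_right _ (le_of_lt pow_pos')
              exact mul_le_mul_of_nonneg_left claim3' (le_of_lt (hx0 i hi))
      exact le_of_mul_le_mul_right final pow_pos'
  obtain ⟨hpos, -⟩ := main E.card E (le_refl _) (le_refl _)
  obtain ⟨f, hf⟩ := Finset.card_pos.mp hpos
  exact ⟨f, fun i hi => (Finset.mem_filter.mp hf).2 i hi⟩

end LLL

lemma count_pairs {V : Type} [Fintype V] [DecidableEq V]
    (B : Finset (V → Bool)) (SV : Finset V) (pr : (v : V) → v ∈ SV → V)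
    (hprS : ∀ v hv, pr v hv ∉ SV)
    (hmem : ∀ f : V → Bool, f ∈ B ↔ ∀ v (hv : v ∈ SV), f v = f (pr v hv)) :
    B.card * 2 ^ SV.card = 2 ^ (Fintype.card V) := by
  classical
  have key : (B ×ˢ (Finset.univ : Finset ({v // v ∈ SV} → Bool))).card
      = (Finset.univ : Finset (V → Bool)).card := by
    refine Finset.card_bij'
      (fun p _ => fun v => if hv : v ∈ SV then p.2 ⟨v, hv⟩ else p.1 v)
      (fun f _ => (fun v => if hv : v ∈ SV then f (pr v hv) else f v, fun u => f u.1))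
      ?_ ?_ ?_ ?_
    · intro p hp
      exact Finset.mem_univ _
    · intro f hf
      simp only [Finset.mem_product, Finset.mem_univ, and_true]
      rw [hmem]
      intro v hv
      rw [dif_pos hv, dif_neg (hprS v hv)]
    · intro p hp
      obtain ⟨hpB, -⟩ := Finset.mem_product.mp hp
      have hB := (hmem p.1).mp hpB
      refine Prod.ext ?_ ?_
      · funext v
        by_cases hv : v ∈ SV
        · simp only [dif_pos hv, dif_neg (hprS v hv)]
          exact (hB v hv).symm
        · simp only [dif_neg hv]
      · funext u
        simp only [dif_pos u.2]
    · intro f hf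
      funext v
      by_cases hv : v ∈ SV
      · simp only [dif_pos hv]
      · simp only [dif_neg hv]
  rw [Finset.card_product, Finset.card_univ, Finset.card_univ] at key
  rw [Fintype.card_fun, Fintype.card_bool, Fintype.card_coe] at key
  rw [Fintype.card_fun, Fintype.card_bool] at key
  exact key

lemma exp_neg_two_le (a : ℝ) (h0 : 0 ≤ a) (h1 : a ≤ 1/2) :
    Real.exp (-(2*a)) ≤ 1 - a := by
  have h2 : 2*a + 1 ≤ Real.exp (2*a) := Real.add_one_le_exp (2*a)
  have h3 : (1:ℝ) ≤ (1 - a) * (1 + 2*a) := by nlinarith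
  have h4 : Real.exp (-(2*a)) * Real.exp (2*a) = 1 := by
    rw [← Real.exp_add]; simp
  nlinarith [Real.exp_pos (2*a), Real.exp_pos (-(2*a))]

lemma dep_sum_bound (n : ℕ) (M : Finset ℕ) (c : ℕ → ℕ)
    (hc : ∀ m ∈ M, c m ≤ 6400 * (n+1) * (m+1)) :
    ∑ m ∈ M, (c m : ℝ) * (1/2)^(20*(m+1)) ≤ ((n:ℝ)+1) / 2 := by
  have key1 : ∀ m : ℕ, ((m:ℝ)+1) * (1/2)^(20*(m+1)) ≤ (1/2)^(19+m) := by
    intro m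
    have h1 : ((m:ℝ)+1) ≤ 2^(m+1) := by
      have h := Nat.lt_two_pow_self (n := m+1)
      exact_mod_cast h.le
    have h2 : ((2:ℝ))^(m+1) * (1/2)^(20*(m+1)) = (1/2)^(19*(m+1)) := by
      have he : (20:ℕ)*(m+1) = (m+1) + 19*(m+1) := by ring
      rw [he, pow_add ((1:ℝ)/2) (m+1) (19*(m+1)), ← mul_assoc, ← mul_pow]
      norm_num
    have h3 : ((1:ℝ)/2)^(19*(m+1)) ≤ (1/2)^(19+m) := by
      apply pow_le_pow_of_le_one (by norm_num) (by norm_num)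
      omega
    calc ((m:ℝ)+1) * (1/2)^(20*(m+1)) ≤ 2^(m+1) * (1/2)^(20*(m+1)) :=
          mul_le_mul_of_nonneg_right h1 (by positivity)
      _ = (1/2)^(19*(m+1)) := h2
      _ ≤ (1/2)^(19+m) := h3
  have key2 : ∑ m ∈ M, ((1:ℝ)/2)^(19+m) ≤ (1/2)^19 * 2 := by
    have he : ∀ m, ((1:ℝ)/2)^(19+m) = (1/2)^19 * (1/2)^m := fun m => pow_add _ _ _
    simp_rw [he]
    rw [← Finset.mul_sum]
    apply mul_le_mul_of_nonneg_left _ (by positivity)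
    obtain ⟨N, hN⟩ := M.exists_nat_subset_range
    calc ∑ m ∈ M, ((1:ℝ)/2)^m ≤ ∑ m ∈ Finset.range N, ((1:ℝ)/2)^m :=
          Finset.sum_le_sum_of_subset_of_nonneg hN (fun _ _ _ => by positivity)
      _ ≤ 2 := sum_geometric_two_le N
  calc ∑ m ∈ M, (c m : ℝ) * (1/2)^(20*(m+1))
      ≤ ∑ m ∈ M, (6400*((n:ℝ)+1)) * (((m:ℝ)+1) * (1/2)^(20*(m+1))) := by
        apply Finset.sum_le_sum
        intro m hm
        have hcast : (c m : ℝ) ≤ 6400*((n:ℝ)+1)*((m:ℝ)+1) := by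
          have := hc m hm
          push_cast
          exact_mod_cast this
        calc (c m:ℝ) * (1/2)^(20*(m+1))
            ≤ (6400*((n:ℝ)+1)*((m:ℝ)+1)) * (1/2)^(20*(m+1)) :=
              mul_le_mul_of_nonneg_right hcast (by positivity)
          _ = (6400*((n:ℝ)+1)) * (((m:ℝ)+1) * (1/2)^(20*(m+1))) := by ring
    _ ≤ ∑ m ∈ M, (6400*((n:ℝ)+1)) * ((1/2:ℝ)^(19+m)) := by
        apply Finset.sum_le_sum
        intro m hm
        exact mul_le_mul_of_nonneg_left (key1 m) (by positivity)
    _ = (6400*((n:ℝ)+1)) * ∑ m ∈ M, ((1/2:ℝ)^(19+m)) := by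
        rw [Finset.mul_sum]
    _ ≤ (6400*((n:ℝ)+1)) * ((1/2)^19 * 2) := mul_le_mul_of_nonneg_left key2 (by positivity)
    _ ≤ ((n:ℝ)+1)/2 := by
        have hn : (0:ℝ) ≤ (n:ℝ) + 1 := by positivity
        nlinarith

lemma prod_dep_bound {ι : Type} (dep : Finset ι) (xv : ι → ℝ) (n : ℕ)
    (hx : ∀ j ∈ dep, 0 ≤ xv j ∧ xv j ≤ 1/2)
    (hsum : ∑ j ∈ dep, xv j ≤ ((n:ℝ)+1)/2) :
    ((1:ℝ)/2)^(20*(n+1)) ≤ ∏ j ∈ dep, (1 - xv j) := by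
  have h1 : Real.exp (-(2 * ∑ j ∈ dep, xv j)) ≤ ∏ j ∈ dep, (1 - xv j) := by
    have he : Real.exp (-(2 * ∑ j ∈ dep, xv j)) = ∏ j ∈ dep, Real.exp (-(2 * xv j)) := by
      rw [← Real.exp_sum]
      congr 1
      rw [Finset.mul_sum, ← Finset.sum_neg_distrib]
    rw [he]
    apply Finset.prod_le_prod
    · intro j hj
      exact (Real.exp_pos _).le
    · intro j hj
      exact exp_neg_two_le (xv j) (hx j hj).1 (hx j hj).2
  have h2 : Real.exp (-((n:ℝ)+1)) ≤ Real.exp (-(2 * ∑ j ∈ dep, xv j)) := by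
    apply Real.exp_le_exp.mpr
    linarith
  have h3 : ((1:ℝ)/2)^(20*(n+1)) ≤ Real.exp (-((n:ℝ)+1)) := by
    have he : Real.exp (-((n:ℝ)+1)) = (Real.exp (-1))^(n+1) := by
      rw [← Real.exp_nat_mul]
      congr 1
      push_cast
      ring
    rw [he]
    have hbase : ((1:ℝ)/2)^20 ≤ Real.exp (-1) := by
      have hlt := Real.exp_one_lt_d9
      have hpos := Real.exp_pos 1
      rw [Real.exp_neg]
      have hmul : ((1:ℝ)/2)^20 * Real.exp 1 ≤ 1 := by nlinarith
      calc ((1:ℝ)/2)^20 = ((1/2:ℝ)^20 * Real.exp 1) / Real.exp 1 := by field_simp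
        _ ≤ 1 / Real.exp 1 := by gcongr
        _ = (Real.exp 1)⁻¹ := one_div _
    calc ((1:ℝ)/2)^(20*(n+1)) = (((1:ℝ)/2)^20)^(n+1) := pow_mul _ _ _
      _ ≤ (Real.exp (-1))^(n+1) := pow_le_pow_left₀ (by positivity) hbase _
  linarith

lemma finite_sat {Q : Type} [Group Q] [DecidableEq Q]
    (sfun : ℕ → Q) (T' : ℕ → Finset Q)
    (hTcard : ∀ n, (T' n).card = 40 * (n + 1))
    (hTdisj : ∀ n, ∀ t ∈ T' n, sfun n * t ∉ T' n)
    (F : Finset (ℕ × Q)) :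
    ∃ y : Q → Bool, ∀ p ∈ F, ∃ t ∈ T' p.1, y (p.2 * sfun p.1 * t) ≠ y (p.2 * t) := by
  classical
  set baseW : ℕ → Finset Q := fun n => T' n ∪ (T' n).image (fun t => sfun n * t) with hbaseW
  set win : ℕ × Q → Finset Q := fun p => (baseW p.1).image (fun t => p.2 * t) with hwin
  set U : Finset Q := F.biUnion win with hU
  set lf : ({q // q ∈ U} → Bool) → Q → Bool :=
    fun f q => if h : q ∈ U then f ⟨q, h⟩ else false with hlf
  set Ev : ℕ × Q → Finset ({q // q ∈ U} → Bool) := fun p =>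
    Finset.univ.filter
      (fun f => ∀ t ∈ T' p.1, lf f (p.2 * sfun p.1 * t) = lf f (p.2 * t)) with hEv
  set Wn : ℕ × Q → Finset {q // q ∈ U} := fun p =>
    Finset.univ.filter (fun v => v.1 ∈ win p) with hWn
  set xw : ℕ × Q → ℝ := fun p => (1/2 : ℝ) ^ (20 * (p.1 + 1)) with hxw
  have hmem1 : ∀ (p : ℕ × Q), ∀ t ∈ T' p.1, p.2 * sfun p.1 * t ∈ win p := by
    intro p t ht
    simp only [hwin, Finset.mem_image]
    refine ⟨sfun p.1 * t, ?_, (mul_assoc _ _ _).symm⟩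
    simp only [hbaseW]
    exact Finset.mem_union_right _ (Finset.mem_image_of_mem _ ht)
  have hmem2 : ∀ (p : ℕ × Q), ∀ t ∈ T' p.1, p.2 * t ∈ win p := by
    intro p t ht
    simp only [hwin, Finset.mem_image]
    refine ⟨t, ?_, rfl⟩
    simp only [hbaseW]
    exact Finset.mem_union_left _ ht
  have hwinU : ∀ p ∈ F, ∀ a ∈ win p, a ∈ U :=
    fun p hp a ha => Finset.mem_biUnion.mpr ⟨p, hp, ha⟩
  have hdet : ∀ p ∈ F, Det (Ev p) (Wn p) := by
    intro p hp f g hagree hf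
    simp only [hEv, Finset.mem_filter, Finset.mem_univ, true_and] at hf ⊢
    intro t ht
    have h1 : p.2 * sfun p.1 * t ∈ U := hwinU p hp _ (hmem1 p t ht)
    have h2 : p.2 * t ∈ U := hwinU p hp _ (hmem2 p t ht)
    have m1 : (⟨p.2 * sfun p.1 * t, h1⟩ : {q // q ∈ U}) ∈ Wn p := by
      simp only [hWn, Finset.mem_filter, Finset.mem_univ, true_and]
      exact hmem1 p t ht
    have m2 : (⟨p.2 * t, h2⟩ : {q // q ∈ U}) ∈ Wn p := by
      simp only [hWn, Finset.mem_filter, Finset.mem_univ, true_and]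
      exact hmem2 p t ht
    have e1 : lf g (p.2 * sfun p.1 * t) = lf f (p.2 * sfun p.1 * t) := by
      simp only [hlf, dif_pos h1]
      exact (hagree _ m1).symm
    have e2 : lf g (p.2 * t) = lf f (p.2 * t) := by
      simp only [hlf, dif_pos h2]
      exact (hagree _ m2).symm
    rw [e1, e2]
    exact hf t ht
  -- counting
  have hcount : ∀ p ∈ F,
      (Ev p).card * 2 ^ (40 * (p.1 + 1)) = 2 ^ (Fintype.card {q // q ∈ U}) := by
    intro p hp
    set S : Finset Q := (T' p.1).image (fun t => p.2 * sfun p.1 * t) with hS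
    have hSU : ∀ a ∈ S, a ∈ U := by
      intro a ha
      simp only [hS, Finset.mem_image] at ha
      obtain ⟨t, ht, rfl⟩ := ha
      exact hwinU p hp _ (hmem1 p t ht)
    set SV : Finset {q // q ∈ U} := Finset.univ.filter (fun v => v.1 ∈ S) with hSV
    have hScard : S.card = (T' p.1).card := by
      simp only [hS]
      apply Finset.card_image_of_injective
      intro a b hab
      exact mul_left_cancel hab
    have hSVcard : SV.card = (T' p.1).card := by
      rw [← hScard]
      apply Finset.card_bij (fun v _ => v.1)
      · intro v hv
        simp only [hSV, Finset.mem_filter] at hv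
        exact hv.2
      · intro v hv w hw h
        exact Subtype.ext h
      · intro a ha
        exact ⟨⟨a, hSU a ha⟩, by
          simp only [hSV, Finset.mem_filter, Finset.mem_univ, true_and]; exact ha, rfl⟩
    -- partner facts
    have hpart : ∀ a ∈ S, (p.2 * ((sfun p.1)⁻¹ * (p.2⁻¹ * a)) ∈ U ∧
        p.2 * ((sfun p.1)⁻¹ * (p.2⁻¹ * a)) ∉ S) := by
      intro a ha
      simp only [hS, Finset.mem_image] at ha
      obtain ⟨t, ht, rfl⟩ := ha
      have hgt : p.2 * ((sfun p.1)⁻¹ * (p.2⁻¹ * (p.2 * sfun p.1 * t))) = p.2 * t := by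
        group
      rw [hgt]
      constructor
      · exact hwinU p hp _ (hmem2 p t ht)
      · intro hc
        simp only [hS, Finset.mem_image] at hc
        obtain ⟨t', ht', he⟩ := hc
        have : t = sfun p.1 * t' := by
          have : p.2 * (sfun p.1 * t') = p.2 * t := by rw [← mul_assoc]; exact he
          exact (mul_left_cancel this).symm
        exact hTdisj p.1 t' ht' (this ▸ ht)
    -- apply count_pairs
    have := count_pairs (Ev p) SV
      (fun v hv => ⟨p.2 * ((sfun p.1)⁻¹ * (p.2⁻¹ * v.1)),
        (hpart v.1 (by simpa only [hSV, Finset.mem_filter, Finset.mem_univ, true_and] using hv)).1⟩)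
      (fun v hv => by
        simp only [hSV, Finset.mem_filter, Finset.mem_univ, true_and]
        exact (hpart v.1 (by simpa only [hSV, Finset.mem_filter, Finset.mem_univ, true_and] using hv)).2)
      (fun f => by
        constructor
        · intro hf v hv
          simp only [hEv, Finset.mem_filter, Finset.mem_univ, true_and] at hf
          have hvS : v.1 ∈ S := by
            simpa only [hSV, Finset.mem_filter, Finset.mem_univ, true_and] using hv
          obtain ⟨t, ht, hvt⟩ := Finset.mem_image.mp (by simpa only [hS] using hvS)
          have hc := hf t ht
          have h1 : p.2 * sfun p.1 * t ∈ U := hwinU p hp _ (hmem1 p t ht)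
          have h2 : p.2 * t ∈ U := hwinU p hp _ (hmem2 p t ht)
          simp only [hlf, dif_pos h1, dif_pos h2] at hc
          have ev : f v = f ⟨p.2 * sfun p.1 * t, h1⟩ := by
            congr 1
            exact Subtype.ext hvt.symm
          have ep : f (⟨p.2 * ((sfun p.1)⁻¹ * (p.2⁻¹ * v.1)), (hpart v.1 hvS).1⟩ : {q // q ∈ U})
              = f ⟨p.2 * t, h2⟩ := by
            congr 1
            apply Subtype.ext
            show p.2 * ((sfun p.1)⁻¹ * (p.2⁻¹ * v.1)) = p.2 * t
            rw [← hvt]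
            group
          show f v = f (⟨p.2 * ((sfun p.1)⁻¹ * (p.2⁻¹ * v.1)), (hpart v.1 hvS).1⟩ : {q // q ∈ U})
          rw [ev, hc, ← ep]
        · intro hf
          simp only [hEv, Finset.mem_filter, Finset.mem_univ, true_and]
          intro t ht
          have h1 : p.2 * sfun p.1 * t ∈ U := hwinU p hp _ (hmem1 p t ht)
          have h2 : p.2 * t ∈ U := hwinU p hp _ (hmem2 p t ht)
          have hvS : (⟨p.2 * sfun p.1 * t, h1⟩ : {q // q ∈ U}) ∈ SV := by
            simp only [hSV, Finset.mem_filter, Finset.mem_univ, true_and, hS]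
            exact Finset.mem_image_of_mem _ ht
          have := hf ⟨p.2 * sfun p.1 * t, h1⟩ hvS
          simp only [hlf, dif_pos h1, dif_pos h2]
          rw [this]
          congr 1
          apply Subtype.ext
          show p.2 * ((sfun p.1)⁻¹ * (p.2⁻¹ * (p.2 * sfun p.1 * t))) = p.2 * t
          group)
    rw [hSVcard, hTcard] at this
    exact this
  -- weights bounds
  have hx0 : ∀ p ∈ F, 0 < xw p := by
    intro p hp
    simp only [hxw]
    positivity
  have hx1 : ∀ p ∈ F, xw p < 1 := by
    intro p hp
    simp only [hxw]
    apply pow_lt_one₀ (by norm_num) (by norm_num)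
    omega
  -- window cards
  have hbaseWcard : ∀ n, (baseW n).card ≤ 80 * (n + 1) := by
    intro n
    simp only [hbaseW]
    calc (T' n ∪ (T' n).image (fun t => sfun n * t)).card
        ≤ (T' n).card + ((T' n).image (fun t => sfun n * t)).card := Finset.card_union_le _ _
      _ ≤ (T' n).card + (T' n).card := by
          have := Finset.card_image_le (s := T' n) (f := fun t => sfun n * t)
          omega
      _ ≤ 80 * (n + 1) := by rw [hTcard]; omega
  have hwincard : ∀ p : ℕ × Q, (win p).card ≤ 80 * (p.1 + 1) := by
    intro p
    calc (win p).card ≤ (baseW p.1).card := by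
          simp only [hwin]; exact Finset.card_image_le
      _ ≤ 80 * (p.1 + 1) := hbaseWcard p.1
  -- the LLL condition
  have hcond : ∀ p ∈ F, ((Ev p).card : ℝ) ≤ xw p * 2 ^ (Fintype.card {q // q ∈ U}) *
      ∏ j ∈ F.filter (fun j => j ≠ p ∧ ¬ Disjoint (Wn j) (Wn p)), (1 - xw j) := by
    intro p hp
    set dep := F.filter (fun j => j ≠ p ∧ ¬ Disjoint (Wn j) (Wn p)) with hdep
    -- fiber bound
    have hfiber : ∀ m, ((dep.filter (fun j => j.1 = m)).card : ℕ)
        ≤ 6400 * (p.1 + 1) * (m + 1) := by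
      intro m
      have hinj : Set.InjOn Prod.snd ((dep.filter (fun j => j.1 = m)) : Set (ℕ × Q)) := by
        intro a ha b hb hab
        have ha' : a.1 = m := (Finset.mem_filter.mp (Finset.mem_coe.mp ha)).2
        have hb' : b.1 = m := (Finset.mem_filter.mp (Finset.mem_coe.mp hb)).2
        exact Prod.ext (ha'.trans hb'.symm) hab
      have hcard1 : (dep.filter (fun j => j.1 = m)).card
          = ((dep.filter (fun j => j.1 = m)).image Prod.snd).card :=
        (Finset.card_image_of_injOn hinj).symm
      have hsub : (dep.filter (fun j => j.1 = m)).image Prod.snd ⊆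
          Finset.image₂ (fun a b => a * b⁻¹) (win p) (baseW m) := by
        intro g' hg'
        obtain ⟨j, hj, rfl⟩ := Finset.mem_image.mp hg'
        have hjm : j.1 = m := (Finset.mem_filter.mp hj).2
        have hjdep : j ∈ dep := (Finset.mem_filter.mp hj).1
        have hnd : ¬ Disjoint (Wn j) (Wn p) := ((Finset.mem_filter.mp hjdep).2).2
        obtain ⟨v, hv1, hv2⟩ := Finset.not_disjoint_iff.mp hnd
        have hv1' : v.1 ∈ win j := by
          simpa only [hWn, Finset.mem_filter, Finset.mem_univ, true_and] using hv1
        have hv2' : v.1 ∈ win p := by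
          simpa only [hWn, Finset.mem_filter, Finset.mem_univ, true_and] using hv2
        obtain ⟨b, hb, hbe⟩ := Finset.mem_image.mp (by simpa only [hwin] using hv1')
        apply Finset.mem_image₂.mpr
        refine ⟨v.1, hv2', b, by rw [← hjm]; exact hb, ?_⟩
        rw [← hbe]
        group
      calc (dep.filter (fun j => j.1 = m)).card
          ≤ (Finset.image₂ (fun a b => a * b⁻¹) (win p) (baseW m)).card := by
            rw [hcard1]; exact Finset.card_le_card hsub
        _ ≤ (win p).card * (baseW m).card := Finset.card_image₂_le _ _ _
        _ ≤ (80 * (p.1 + 1)) * (80 * (m + 1)) :=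
            Nat.mul_le_mul (hwincard p) (hbaseWcard m)
        _ = 6400 * (p.1 + 1) * (m + 1) := by ring
    -- sum bound
    have hsum : ∑ j ∈ dep, xw j ≤ ((p.1:ℝ)+1)/2 := by
      have hcomp : ∑ j ∈ dep, xw j
          = ∑ m ∈ dep.image Prod.fst,
              ((dep.filter (fun j => j.1 = m)).card : ℝ) * (1/2)^(20*(m+1)) := by
        have := Finset.sum_comp (s := dep) (fun m : ℕ => ((1:ℝ)/2)^(20*(m+1))) Prod.fst
        simp only [nsmul_eq_mul] at this
        exact this
      rw [hcomp]
      exact dep_sum_bound p.1 (dep.image Prod.fst) _ (fun m _ => hfiber m)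
    have hxbnd : ∀ j ∈ dep, 0 ≤ xw j ∧ xw j ≤ 1/2 := by
      intro j hj
      constructor
      · simp only [hxw]; positivity
      · simp only [hxw]
        calc ((1:ℝ)/2)^(20*(j.1+1)) ≤ (1/2)^1 := by
              apply pow_le_pow_of_le_one (by norm_num) (by norm_num)
              omega
          _ = 1/2 := pow_one _
    have hprod := prod_dep_bound dep xw p.1 hxbnd hsum
    -- count in ℝ
    have hcountR : ((Ev p).card : ℝ) * 2^(40*(p.1+1)) = 2^(Fintype.card {q // q ∈ U}) := by
      exact_mod_cast congrArg (Nat.cast : ℕ → ℝ) (hcount p hp)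
    have hEvR : ((Ev p).card : ℝ)
        = 2^(Fintype.card {q // q ∈ U}) * ((1:ℝ)/2)^(40*(p.1+1)) := by
      have hpow : (0:ℝ) < 2^(40*(p.1+1)) := by positivity
      have hinv : ((1:ℝ)/2)^(40*(p.1+1)) * 2^(40*(p.1+1)) = 1 := by
        rw [← mul_pow]; norm_num
      apply mul_right_cancel₀ (ne_of_gt hpow)
      rw [hcountR, mul_assoc, hinv, mul_one]
    calc ((Ev p).card : ℝ)
        = 2^(Fintype.card {q // q ∈ U}) * ((1:ℝ)/2)^(40*(p.1+1)) := hEvR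
      _ = xw p * 2^(Fintype.card {q // q ∈ U}) * ((1:ℝ)/2)^(20*(p.1+1)) := by
          simp only [hxw]
          rw [show 40*(p.1+1) = 20*(p.1+1) + 20*(p.1+1) by ring, pow_add]
          ring
      _ ≤ xw p * 2^(Fintype.card {q // q ∈ U}) * ∏ j ∈ dep, (1 - xw j) := by
          apply mul_le_mul_of_nonneg_left hprod
          apply mul_nonneg
          · simp only [hxw]; positivity
          · positivity
  obtain ⟨f, hf⟩ := lll F Ev Wn xw hdet hx0 hx1 hcond
  refine ⟨lf f, fun p hp => ?_⟩
  have hnot := hf p hp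
  simp only [hEv, Finset.mem_filter, Finset.mem_univ, true_and] at hnot
  push_neg at hnot
  exact hnot

lemma exists_T {Q : Type} [Group Q] [Infinite Q] [DecidableEq Q] (s : Q) (hs : s ≠ 1) :
    ∀ N : ℕ, ∃ T : Finset Q, T.card = N ∧ ∀ t ∈ T, s * t ∉ T := by
  intro N
  induction N with
  | zero => exact ⟨∅, rfl, by simp⟩
  | succ n ih =>
    obtain ⟨T, hc, hd⟩ := ih
    obtain ⟨t, ht⟩ := Infinite.exists_notMem_finset
      (T ∪ T.image (fun a => s⁻¹ * a) ∪ T.image (fun a => s * a))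
    simp only [Finset.mem_union, Finset.mem_image, not_or, not_exists, not_and] at ht
    obtain ⟨⟨htT, htinv⟩, htmul⟩ := ht
    refine ⟨insert t T, ?_, ?_⟩
    · rw [Finset.card_insert_of_notMem htT, hc]
    · intro t' ht'
      rcases Finset.mem_insert.mp ht' with rfl | ht'
      · intro hmem
        rcases Finset.mem_insert.mp hmem with he | hmem
        · exact hs (mul_right_cancel (by rw [one_mul, he]))
        · exact htinv (s * t') hmem (by rw [inv_mul_cancel_left])
      · intro hmem
        rcases Finset.mem_insert.mp hmem with he | hmem
        · exact htmul t' ht' he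
        · exact hd t' ht' hmem

lemma key_infinite (Q : Type) [Group Q] [Countable Q] [Infinite Q] :
    ∃ (T : Q → Finset Q) (y : Q → Bool),
      ∀ s : Q, s ≠ 1 → ∀ g : Q, ∃ t ∈ T s, y (g * s * t) ≠ y (g * t) := by
  classical
  obtain ⟨e, he⟩ := exists_surjective_nat Q
  obtain ⟨w, hw⟩ := exists_ne (1 : Q)
  set sfun : ℕ → Q := fun n => if e n = 1 then w else e n with hsfun
  have hsne : ∀ n, sfun n ≠ 1 := by
    intro n
    simp only [hsfun]
    split_ifs with h
    · exact hw
    · exact h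
  have hTex : ∀ n : ℕ, ∃ T : Finset Q, T.card = 40 * (n+1) ∧ ∀ t ∈ T, sfun n * t ∉ T :=
    fun n => exists_T (sfun n) (hsne n) (40 * (n+1))
  choose T' hTcard hTdisj using hTex
  set Z : ℕ × Q → Set (Q → Bool) :=
    fun p => {y | ∃ t ∈ T' p.1, y (p.2 * sfun p.1 * t) ≠ y (p.2 * t)} with hZ
  have hZclosed : ∀ p, IsClosed (Z p) := by
    intro p
    have hzu : Z p = ⋃ t ∈ (T' p.1 : Set Q),
        {y : Q → Bool | y (p.2 * sfun p.1 * t) ≠ y (p.2 * t)} := by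
      ext y
      simp only [hZ, Set.mem_setOf_eq, Set.mem_iUnion, Finset.mem_coe, exists_prop]
    rw [hzu]
    apply Set.Finite.isClosed_biUnion (Finset.finite_toSet _)
    intro t ht
    have hpre : {y : Q → Bool | y (p.2 * sfun p.1 * t) ≠ y (p.2 * t)}
        = (fun y : Q → Bool => (y (p.2 * sfun p.1 * t), y (p.2 * t))) ⁻¹'
          {q : Bool × Bool | q.1 ≠ q.2} := rfl
    rw [hpre]
    apply IsClosed.preimage
    · exact (continuous_apply _).prodMk (continuous_apply _)
    · exact isClosed_discrete _
  have hinter : (⋂ p : ℕ × Q, Z p).Nonempty := by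
    by_contra hc
    rw [Set.not_nonempty_iff_eq_empty] at hc
    obtain ⟨F, hF⟩ := IsCompact.elim_finite_subfamily_closed isCompact_univ Z hZclosed
      (by rw [Set.univ_inter]; exact hc)
    obtain ⟨y, hy⟩ := finite_sat sfun T' hTcard hTdisj F
    have hmem : y ∈ Set.univ ∩ ⋂ p ∈ F, Z p := by
      refine ⟨trivial, ?_⟩
      apply Set.mem_iInter₂.mpr
      intro p hp
      exact hy p hp
    rw [hF] at hmem
    exact hmem
  obtain ⟨y, hy⟩ := hinter
  refine ⟨fun s => if h : ∃ n, e n = s then T' h.choose else ∅, y, ?_⟩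
  intro s hs g
  have hex : ∃ n, e n = s := he s
  simp only [dif_pos hex]
  have hn : e hex.choose = s := hex.choose_spec
  have hsf : sfun hex.choose = s := by
    simp only [hsfun]
    rw [hn]
    exact if_neg hs
  have hz := Set.mem_iInter.mp hy (hex.choose, g)
  simp only [hZ, Set.mem_setOf_eq] at hz
  rw [hsf] at hz
  exact hz


section Aux1

variable {G : Type} [Group G] {A : Type}

lemma shiftAct_one (x : G → A) : shiftAct (1 : G) x = x := by
  funext h; simp [shiftAct]

lemma shiftAct_shiftAct (a b : G) (x : G → A) :
    shiftAct a (shiftAct b x) = shiftAct (a * b) x := by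
  funext h; simp [shiftAct, mul_assoc]

lemma mem_stab_iff {x : G → A} {g : G} : g ∈ stab x ↔ shiftAct g x = x := Iff.rfl

lemma shiftSpace_shiftAct {𝓕 : Set (Pattern G A)} {x : G → A}
    (hx : x ∈ shiftSpace 𝓕) (g : G) : shiftAct g x ∈ shiftSpace 𝓕 := by
  intro p hp hap
  obtain ⟨k, hk⟩ := hap
  refine hx p hp ⟨g⁻¹ * k, fun h hh => ?_⟩
  have := hk h hh
  simpa [shiftAct, mul_assoc] using this

lemma stab_shiftAct (g : G) (x : G → A) (u : G) :
    u ∈ stab (shiftAct g x) ↔ g⁻¹ * u * g ∈ stab x := by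
  have inj : Function.Injective (fun z : G → A => shiftAct g⁻¹ z) := by
    intro z w hzw
    have := congrArg (shiftAct g) hzw
    simpa [shiftAct_shiftAct, shiftAct_one] using this
  constructor
  · intro hu
    have hu' : shiftAct u (shiftAct g x) = shiftAct g x := hu
    have : shiftAct (g⁻¹ * (u * g)) x = shiftAct (g⁻¹ * g) x := by
      rw [← shiftAct_shiftAct, ← shiftAct_shiftAct u g x, hu', shiftAct_shiftAct]
    show shiftAct (g⁻¹ * u * g) x = x
    rw [mul_assoc]
    simpa [shiftAct_one] using this
  · intro hu
    have hu' : shiftAct (g⁻¹ * u * g) x = x := hu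
    show shiftAct u (shiftAct g x) = shiftAct g x
    rw [shiftAct_shiftAct]
    have := congrArg (shiftAct g) hu'
    rw [shiftAct_shiftAct] at this
    have h2 : g * (g⁻¹ * u * g) = u * g := by group
    rw [h2] at this
    exact this

lemma normal_of_realized {A : Type} (H : Subgroup G) (X : Set (G → A))
    (hsub : IsSubshift X) (hne : X.Nonempty) (hstab : ∀ x ∈ X, stab x = H) :
    H.Normal := by
  obtain ⟨𝓕, rfl⟩ := hsub
  obtain ⟨x, hx⟩ := hne
  constructor
  intro h hh g
  have hgx := shiftSpace_shiftAct hx g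
  have h1 : stab (shiftAct g x) = H := hstab _ hgx
  have h2 : stab x = H := hstab _ hx
  have : g * h * g⁻¹ ∈ stab (shiftAct g x) := by
    rw [stab_shiftAct]
    have : g⁻¹ * (g * h * g⁻¹) * g = h := by group
    rw [this, h2]
    exact hh
  rwa [h1] at this

end Aux1

section Realize

variable {G : Type} [Group G]

lemma realize_of_normal (H : Subgroup G) [hN : H.Normal]
    (A : Type) (T : G ⧸ H → Finset (G ⧸ H)) (y : G ⧸ H → A)
    (hTC : ∀ s : G ⧸ H, s ≠ 1 → ∀ g : G ⧸ H, ∃ t ∈ T s, y (g * s * t) ≠ y (g * t)) :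
    ∃ X : Set (G → A), IsSubshift X ∧ X.Nonempty ∧ ∀ x ∈ X, stab x = H := by
  classical
  set σ : G ⧸ H → G := fun q => q.out with hσ
  have hmkσ : ∀ q : G ⧸ H, ((σ q : G) : G ⧸ H) = q := fun q => QuotientGroup.out_eq' q
  set patt : G ⧸ H → Finset G := fun s =>
    ((T s).image fun t => σ (s * t)) ∪ ((T s).image fun t => σ t) with hpatt
  set 𝓕₁ : Set (Pattern G A) :=
    {p | ∃ h ∈ H, p.1 = ({1, h} : Finset G) ∧ p.2 1 ≠ p.2 h} with h𝓕₁
  set 𝓕₂ : Set (Pattern G A) :=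
    {p | ∃ s : G ⧸ H, s ≠ 1 ∧ p.1 = patt s ∧ ∀ t ∈ T s, p.2 (σ (s * t)) = p.2 (σ t)} with h𝓕₂
  refine ⟨shiftSpace (𝓕₁ ∪ 𝓕₂), ⟨_, rfl⟩, ?_, ?_⟩
  · -- nonempty : x₀ = y ∘ mk
    refine ⟨fun g => y ((g : G ⧸ H)), ?_⟩
    rintro p (hp | hp) hap
    · obtain ⟨h, hH, hp1, hp2⟩ := hp
      obtain ⟨g, hg⟩ := hap
      have e1 : y (((g * 1 : G) : G ⧸ H)) = p.2 1 := hg 1 (by simp [hp1])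
      have e2 : y (((g * h : G) : G ⧸ H)) = p.2 h := hg h (by simp [hp1])
      have hmk : ((h : G) : G ⧸ H) = 1 := (QuotientGroup.eq_one_iff h).mpr hH
      have e1' : y (((g * 1 : G) : G ⧸ H)) = p.2 1 := e1
      have e2' : y (((g * h : G) : G ⧸ H)) = p.2 h := e2
      apply hp2
      rw [← e1', ← e2']
      congr 1
      rw [mul_one, QuotientGroup.mk_mul, hmk, mul_one]
    · obtain ⟨s, hs, hp1, hp2⟩ := hp
      obtain ⟨g, hg⟩ := hap
      obtain ⟨t, ht, hne⟩ := hTC s hs ((g : G ⧸ H))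
      apply hne
      have m1 : σ (s * t) ∈ p.1 := by
        rw [hp1]
        exact Finset.mem_union_left _ (Finset.mem_image_of_mem _ ht)
      have m2 : σ t ∈ p.1 := by
        rw [hp1]
        exact Finset.mem_union_right _ (Finset.mem_image_of_mem _ ht)
      have e1 : y (((g * σ (s * t) : G) : G ⧸ H)) = p.2 (σ (s * t)) := hg _ m1
      have e2 : y (((g * σ t : G) : G ⧸ H)) = p.2 (σ t) := hg _ m2
      have c1 : y (((g * σ (s * t) : G) : G ⧸ H)) = y ((g : G ⧸ H) * s * t) := by
        rw [QuotientGroup.mk_mul, hmkσ, mul_assoc]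
      have c2 : y (((g * σ t : G) : G ⧸ H)) = y ((g : G ⧸ H) * t) := by
        rw [QuotientGroup.mk_mul, hmkσ]
      rw [← c1, ← c2, e1, e2]
      exact hp2 t ht
  · -- stabilizers
    intro x hx
    -- condition C1
    have C1 : ∀ (g : G) (h : G), h ∈ H → x (g * h) = x g := by
      intro g h hH
      by_contra hne
      refine hx (({1, h}, fun k => x (g * k))) (Or.inl ⟨h, hH, rfl, ?_⟩) ⟨g, fun k _ => rfl⟩
      show x (g * 1) ≠ x (g * h)
      intro e
      rw [mul_one] at e
      exact hne e.symm
    -- factorization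
    have fact : ∀ g : G, x g = x (σ ((g : G ⧸ H))) := by
      intro g
      have hmem : (σ ((g : G ⧸ H)))⁻¹ * g ∈ H := by
        rw [← QuotientGroup.eq, hmkσ]
      have : x (σ ((g : G ⧸ H)) * ((σ ((g : G ⧸ H)))⁻¹ * g)) = x (σ ((g : G ⧸ H))) :=
        C1 _ _ hmem
      rwa [mul_inv_cancel_left] at this
    have C2 : ∀ s : G ⧸ H, s ≠ 1 → ∀ g : G, ∃ t ∈ T s, x (g * σ (s * t)) ≠ x (g * σ t) := by
      intro s hs g
      by_contra hne
      push_neg at hne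
      exact hx ((patt s, fun k => x (g * k))) (Or.inr ⟨s, hs, rfl, hne⟩) ⟨g, fun k _ => rfl⟩
    ext u
    constructor
    · -- stab x ⊆ H
      intro hu
      have hu' : ∀ g : G, x (u⁻¹ * g) = x g := fun g => congrFun hu g
      by_contra huH
      have hmku : ((u : G) : G ⧸ H) ≠ 1 := fun e => huH ((QuotientGroup.eq_one_iff u).mp e)
      set s : G ⧸ H := ((u : G) : G ⧸ H)⁻¹ with hsdef
      have hs : s ≠ 1 := inv_ne_one.mpr hmku
      obtain ⟨t, ht, hne⟩ := C2 s hs 1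
      apply hne
      have key : x (σ (s * t)) = x (σ t) := by
        have hmk : ((u⁻¹ * σ t : G) : G ⧸ H) = s * t := by
          rw [QuotientGroup.mk_mul, QuotientGroup.mk_inv, hmkσ, hsdef]
        calc x (σ (s * t)) = x (σ (((u⁻¹ * σ t : G) : G ⧸ H))) := by rw [hmk]
          _ = x (u⁻¹ * σ t) := (fact _).symm
          _ = x (σ t) := hu' _
      rw [one_mul, one_mul]
      exact key
    · -- H ⊆ stab x
      intro hu
      show shiftAct u x = x
      funext g
      show x (u⁻¹ * g) = x g
      have h1 : ((u⁻¹ * g : G) : G ⧸ H) = ((g : G) : G ⧸ H) := by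
        rw [QuotientGroup.mk_mul, QuotientGroup.mk_inv,
          (QuotientGroup.eq_one_iff u).mpr hu, inv_one, one_mul]
      rw [fact (u⁻¹ * g), h1, ← fact g]

end Realize

section Key

lemma countable_of_fg (G : Type) [Group G] [Group.FG G] : Countable G := by
  obtain ⟨S, hc, hfin⟩ := Group.fg_iff.mp ‹_›
  haveI : Countable S := hfin.countable
  haveI : Countable (FreeGroup S) := (Quot.mk_surjective).countable
  have hsur : Function.Surjective (FreeGroup.lift (Subtype.val : S → G)) := by
    rw [← MonoidHom.range_eq_top, FreeGroup.range_lift_eq_closure, Subtype.range_coe]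
    exact hc
  exact hsur.countable

lemma key (Q : Type) [Group Q] [Countable Q] :
    ∃ (A : Type) (_ : Finite A) (_ : Nonempty A) (T : Q → Finset Q) (y : Q → A),
      ∀ s : Q, s ≠ 1 → ∀ g : Q, ∃ t ∈ T s, y (g * s * t) ≠ y (g * t) := by
  cases finite_or_infinite Q with
  | inl hfin =>
    refine ⟨Q, inferInstance, ⟨1⟩, fun _ => {1}, id, ?_⟩
    intro s hs g
    refine ⟨1, Finset.mem_singleton_self 1, ?_⟩
    simp only [id_eq, mul_one]
    intro e
    exact hs (mul_left_cancel (a := g) (by rw [mul_one]; exact e))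
  | inr hinf =>
    obtain ⟨T, y, hTC⟩ := key_infinite Q
    exact ⟨Bool, inferInstance, ⟨true⟩, T, y, hTC⟩

end Key

/-- A subgroup `H` of a finitely generated group `G` is realizable by a
nonempty `G`-subshift (not necessarily of finite type) if and only if `H` is normal. -/
theorem statement6 {G : Type} [Group G] [Group.FG G] (H : Subgroup G) :
    (∃ (A : Type) (_ : Finite A) (_ : Nonempty A) (X : Set (G → A)),
        IsSubshift X ∧ X.Nonempty ∧ ∀ x ∈ X, stab x = H) ↔ H.Normal := by
  constructor
  · rintro ⟨A, _, _, X, hsub, hne, hstab⟩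
    exact normal_of_realized H X hsub hne hstab
  · intro hN
    haveI := hN
    haveI : Countable G := countable_of_fg G
    haveI : Countable (G ⧸ H) := Quotient.countable
    obtain ⟨A, hfin, hne, T, y, hTC⟩ := key (G ⧸ H)
    obtain ⟨X, hsub, hXne, hstab⟩ := realize_of_normal H A T y hTC
    exact ⟨A, hfin, hne, X, hsub, hXne, hstab⟩
end

section
/- Let G be a finitely generated group, N a normal subgroup of G, and π : G → G/N the quotient map. For any G/N-subshift X ⊆ A^{G/N}, the pull-back π*(X) = {x∘π : x ∈ X} ⊆ A^G is a G-subshift satisfying stab(π*(X)) = {π⁻¹(K) : K ∈ stab(X)}. Moreover, if N is finitely generated and a family 𝒢 of subgroups of G/N is realizable in G/N, then the family {π⁻¹(K) : K ∈ 𝒢} is realizable in G. -/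
section Statement7Aux

open scoped Classical

variable {G : Type} [Group G] {A : Type}

lemma mem_stab {g : G} {y : G → A} : g ∈ stab y ↔ shiftAct g y = y := Iff.rfl

variable (N : Subgroup G) [N.Normal]

lemma stab_comp (x : G ⧸ N → A) :
    stab (x ∘ QuotientGroup.mk' N) = (stab x).comap (QuotientGroup.mk' N) := by
  ext g
  rw [mem_stab, Subgroup.mem_comap, mem_stab]
  constructor
  · intro hg
    funext q
    obtain ⟨h, rfl⟩ := QuotientGroup.mk'_surjective N q
    have := congrFun hg h
    simpa [shiftAct, Function.comp] using this
  · intro hg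
    funext h
    have := congrFun hg (QuotientGroup.mk' N h)
    simpa [shiftAct, Function.comp] using this

/-- Coset-constancy. -/
def CC (y : G → A) : Prop := ∀ g n, n ∈ N → y (g * n) = y g

lemma CC_iff (y : G → A) : CC N y ↔ ∃ x : G ⧸ N → A, y = x ∘ QuotientGroup.mk' N := by
  constructor
  · intro hcc
    refine ⟨fun q => y q.out, funext fun g => ?_⟩
    have hn : g⁻¹ * ((QuotientGroup.mk' N g) : G ⧸ N).out ∈ N :=
      QuotientGroup.eq.mp (QuotientGroup.out_eq' (QuotientGroup.mk' N g)).symm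
    have := hcc g _ hn
    simp only [Function.comp_apply]
    rw [← this, mul_inv_cancel_left]
  · rintro ⟨x, rfl⟩ g n hn
    simp only [Function.comp_apply]
    congr 1
    show QuotientGroup.mk (g * n) = QuotientGroup.mk g
    rw [QuotientGroup.mk_mul, (QuotientGroup.eq_one_iff n).mpr hn, mul_one]

/-- Pull back a pattern on `G ⧸ N` to a pattern on `G`. -/
noncomputable def pullPat (p : Pattern (G ⧸ N) A) : Pattern G A :=
  (p.1.image Quotient.out, p.2 ∘ QuotientGroup.mk' N)

lemma appears_pull (x : G ⧸ N → A) (p : Pattern (G ⧸ N) A) :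
    Appears (pullPat N p) (x ∘ QuotientGroup.mk' N) ↔ Appears p x := by
  constructor
  · rintro ⟨g, hg⟩
    refine ⟨QuotientGroup.mk' N g, fun h hh => ?_⟩
    have := hg h.out (Finset.mem_image_of_mem _ hh)
    simpa [pullPat, Function.comp, QuotientGroup.out_eq'] using this
  · rintro ⟨q, hq⟩
    refine ⟨q.out, fun k hk => ?_⟩
    obtain ⟨h, hh, rfl⟩ := Finset.mem_image.1 hk
    have := hq h hh
    simpa [pullPat, Function.comp, QuotientGroup.out_eq'] using this

lemma pull_shiftSpace (C : Set (Pattern G A))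
    (hC : ∀ y : G → A, (∀ p ∈ C, ¬ Appears p y) ↔ CC N y)
    (𝓕 : Set (Pattern (G ⧸ N) A)) :
    {y : G → A | ∃ x ∈ shiftSpace 𝓕, y = x ∘ QuotientGroup.mk' N}
      = shiftSpace (C ∪ pullPat N '' 𝓕) := by
  ext y
  simp only [Set.mem_setOf_eq]
  constructor
  · rintro ⟨x, hx, rfl⟩
    intro p hp
    rcases hp with hp | ⟨q, hq, rfl⟩
    · have hcc : CC N (x ∘ QuotientGroup.mk' N) := (CC_iff N _).2 ⟨x, rfl⟩
      exact ((hC _).2 hcc) p hp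
    · rw [appears_pull N x q]
      exact hx q hq
  · intro hy
    have havoidC : ∀ p ∈ C, ¬ Appears p y := fun p hp => hy p (Or.inl hp)
    obtain ⟨x, rfl⟩ := (CC_iff N y).1 ((hC y).1 havoidC)
    refine ⟨x, ?_, rfl⟩
    intro p hp hap
    exact hy _ (Or.inr ⟨p, hp, rfl⟩) ((appears_pull N x p).2 hap)

/-- Forbidden patterns enforcing coset-constancy (not finite). -/
def Cfull : Set (Pattern G A) :=
  {p : Pattern G A | ∃ n ∈ N, p.1 = insert (1:G) {n} ∧ p.2 1 ≠ p.2 n}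

lemma Cfull_avoid (y : G → A) :
    (∀ p ∈ (Cfull N : Set (Pattern G A)), ¬ Appears p y) ↔ CC N y := by
  constructor
  · intro h g n hn
    by_contra hne
    exact h (insert (1:G) {n}, fun k => y (g * k))
      ⟨n, hn, rfl, by simpa using Ne.symm hne⟩ ⟨g, fun k _ => rfl⟩
  · rintro hcc p ⟨n, hn, hp1, hp2⟩ ⟨g, hg⟩
    apply hp2
    have h1 := hg 1 (by rw [hp1]; exact Finset.mem_insert_self _ _)
    have h2 := hg n (by rw [hp1]; simp)
    rw [← h1, ← h2, mul_one, hcc g n hn]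

/-- Finitely many forbidden patterns enforcing coset-constancy, from a generating set. -/
noncomputable def Cfin (S : Finset G) : Set (Pattern G A) :=
  (fun t : G × A × A =>
      ((insert (1:G) {t.1} : Finset G), fun h => if h = t.1 then t.2.2 else t.2.1)) ''
    {t | t.1 ∈ S ∧ t.1 ≠ 1 ∧ t.2.1 ≠ t.2.2}

lemma Cfin_finite [Finite A] (S : Finset G) : (Cfin S : Set (Pattern G A)).Finite := by
  apply Set.Finite.image
  apply Set.Finite.subset (Set.Finite.prod S.finite_toSet (Set.finite_univ (α := A × A)))
  intro t ht
  exact ⟨ht.1, Set.mem_univ _⟩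

lemma Cfin_avoid (S : Finset G) (hS : Subgroup.closure (S : Set G) = N) (y : G → A) :
    (∀ p ∈ (Cfin S : Set (Pattern G A)), ¬ Appears p y) ↔ CC N y := by
  constructor
  · intro h g n hn
    have key : ∀ s ∈ S, ∀ g : G, y (g * s) = y g := by
      intro s hs g
      by_cases hs1 : s = 1
      · rw [hs1, mul_one]
      by_contra hne
      apply h ((insert (1:G) {s} : Finset G), fun k => if k = s then y (g * s) else y g)
        ⟨(s, y g, y (g * s)), ⟨hs, hs1, Ne.symm hne⟩, rfl⟩
      refine ⟨g, fun k hk => ?_⟩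
      rcases Finset.mem_insert.1 hk with rfl | hk
      · simp [Ne.symm hs1]
      · obtain rfl := Finset.mem_singleton.1 hk
        simp
    rw [← hS] at hn
    have hall : ∀ n, n ∈ Subgroup.closure (S : Set G) → ∀ g : G, y (g * n) = y g := by
      intro n hn
      induction hn using Subgroup.closure_induction with
      | mem s hs => exact key s hs
      | one => intro g; rw [mul_one]
      | mul a b _ _ ha hb => intro g; rw [← mul_assoc, hb, ha]
      | inv a _ ha =>
        intro g
        have := ha (g * a⁻¹)
        rw [mul_assoc, inv_mul_cancel, mul_one] at this
        exact this.symm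
    exact hall n hn g
  · rintro hcc p ⟨⟨s, a, b⟩, ⟨hs, hs1, hab⟩, rfl⟩ ⟨g, hg⟩
    have hsN : s ∈ N := by
      rw [← hS]; exact Subgroup.subset_closure hs
    have h1 : y g = a := by simpa [Ne.symm hs1] using hg 1 (Finset.mem_insert_self _ _)
    have h2 : y (g * s) = b := by simpa using hg s (by simp)
    exact hab (show a = b by rw [← h1, ← h2, hcc g s hsN])

lemma stab_image (X : Set (G ⧸ N → A)) :
    stab '' {y : G → A | ∃ x ∈ X, y = x ∘ (QuotientGroup.mk' N)} =
      (fun K => Subgroup.comap (QuotientGroup.mk' N) K) '' (stab '' X) := by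
  ext K
  simp only [Set.mem_image, Set.mem_setOf_eq]
  constructor
  · rintro ⟨y, ⟨x, hx, rfl⟩, rfl⟩
    exact ⟨stab x, ⟨x, hx, rfl⟩, (stab_comp N x).symm⟩
  · rintro ⟨K', ⟨x, hx, rfl⟩, rfl⟩
    exact ⟨x ∘ QuotientGroup.mk' N, ⟨x, hx, rfl⟩, stab_comp N x⟩

end Statement7Aux

/-- The pull-back of a `G/N`-subshift along the quotient map
`π : G → G/N` is a `G`-subshift whose set of stabilizers is the set of preimages
`π⁻¹(K)` for `K` a stabilizer of the original subshift; moreover, if `N` is finitely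
generated, the pull-back of a realizable family of subgroups of `G/N` is realizable
in `G`. -/
theorem statement7 {G : Type} [Group G] [Group.FG G] (N : Subgroup G) [N.Normal] :
    (∀ (A : Type) (_ : Finite A) (_ : Nonempty A) (X : Set (G ⧸ N → A)),
        IsSubshift X →
          IsSubshift {y : G → A | ∃ x ∈ X, y = x ∘ (QuotientGroup.mk' N)} ∧
          stab '' {y : G → A | ∃ x ∈ X, y = x ∘ (QuotientGroup.mk' N)} =
            (fun K => Subgroup.comap (QuotientGroup.mk' N) K) '' (stab '' X)) ∧
    (N.FG → ∀ 𝒢 : Set (Subgroup (G ⧸ N)), Realizable 𝒢 →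
        Realizable ((fun K => Subgroup.comap (QuotientGroup.mk' N) K) '' 𝒢)) := by
  constructor
  · intro A _ _ X hX
    refine ⟨?_, stab_image N X⟩
    obtain ⟨𝓕, rfl⟩ := hX
    exact ⟨Cfull N ∪ pullPat N '' 𝓕, pull_shiftSpace N (Cfull N) (Cfull_avoid N) 𝓕⟩
  · rintro hNfg 𝒢 ⟨A, finA, neA, X, ⟨𝓕, h𝓕fin, rfl⟩, hXne, hstab⟩
    obtain ⟨S, hS⟩ := hNfg
    refine ⟨A, finA, neA,
      {y : G → A | ∃ x ∈ shiftSpace 𝓕, y = x ∘ (QuotientGroup.mk' N)}, ?_, ?_, ?_⟩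
    · exact ⟨Cfin S ∪ pullPat N '' 𝓕, (Cfin_finite S).union (h𝓕fin.image _),
        pull_shiftSpace N (Cfin S) (Cfin_avoid N S hS) 𝓕⟩
    · obtain ⟨x, hx⟩ := hXne
      exact ⟨x ∘ QuotientGroup.mk' N, x, hx, rfl⟩
    · rw [stab_image N (shiftSpace 𝓕), hstab]
end

section
/- Let G be a finitely generated group, N a finitely generated normal subgroup of G, π : G → G/N the quotient map, and ρ : G/N → G any section of π. Let X ⊆ Fix_A(N) be a G-subshift, where Fix_A(N) = {x ∈ A^G : n·x = x for all n ∈ N}. Then the push-forward ρ*(X) = {x∘ρ : x ∈ X} ⊆ A^{G/N} is a G/N-subshift satisfying stab(ρ*(X)) = {π(K) : K ∈ stab(X)}. In particular, if a family 𝒢 of subgroups of G is realizable in G and N ⊆ H for every H ∈ 𝒢, then the family 𝒢/N = {π(H) : H ∈ 𝒢} is realizable in G/N. -/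
namespace Statement8Aux

variable {G A : Type} [Group G] (N : Subgroup G) [N.Normal]

lemma shiftAct_mul (a b : G) (x : G → A) :
    shiftAct (a * b) x = shiftAct a (shiftAct b x) := by
  funext h; simp [shiftAct, mul_assoc]

lemma mem_stab {g : G} {x : G → A} : g ∈ stab x ↔ shiftAct g x = x := Iff.rfl

/-- An `N`-fixed configuration only depends on the coset. -/
lemma fix_eq {x : G → A} (hx : ∀ n ∈ N, shiftAct n x = x) {g g' : G}
    (h : (QuotientGroup.mk g : G ⧸ N) = QuotientGroup.mk g') : x g = x g' := by
  have hn : g⁻¹ * g' ∈ N := (QuotientGroup.eq).mp h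
  have hm : g' * g⁻¹ ∈ N := by
    have h2 := (inferInstance : N.Normal).conj_mem _ hn g
    simpa [mul_assoc] using h2
  have h3 := congrFun (hx _ hm) g'
  simp only [shiftAct, mul_inv_rev, inv_inv] at h3
  simpa [mul_assoc] using h3

lemma comp_rho {x : G → A} (hx : ∀ n ∈ N, shiftAct n x = x)
    (ρ : G ⧸ N → G) (hρ : ∀ k, (QuotientGroup.mk (ρ k) : G ⧸ N) = k) (g : G) :
    x (ρ (QuotientGroup.mk g)) = x g :=
  fix_eq N hx (by rw [hρ])

lemma fixed_eq_of_comp {x₁ x₂ : G → A}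
    (h1 : ∀ n ∈ N, shiftAct n x₁ = x₁) (h2 : ∀ n ∈ N, shiftAct n x₂ = x₂)
    (ρ : G ⧸ N → G) (hρ : ∀ k, (QuotientGroup.mk (ρ k) : G ⧸ N) = k)
    (h : x₁ ∘ ρ = x₂ ∘ ρ) : x₁ = x₂ := by
  funext g
  have := congrFun h (QuotientGroup.mk g)
  simp only [Function.comp] at this
  rw [← comp_rho N h1 ρ hρ g, ← comp_rho N h2 ρ hρ g]
  exact this

lemma fix_shift {x : G → A} (hx : ∀ n ∈ N, shiftAct n x = x) (g : G) :
    ∀ n ∈ N, shiftAct n (shiftAct g x) = shiftAct g x := by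
  intro n hn
  have hmem : g⁻¹ * n * g ∈ N := by
    have := (inferInstance : N.Normal).conj_mem _ hn g⁻¹
    simpa using this
  calc shiftAct n (shiftAct g x) = shiftAct (n * g) x := (shiftAct_mul _ _ _).symm
    _ = shiftAct (g * (g⁻¹ * n * g)) x := by congr 1; group
    _ = shiftAct g (shiftAct (g⁻¹ * n * g) x) := shiftAct_mul _ _ _
    _ = shiftAct g x := by rw [hx _ hmem]

/-- Equivariance of `x ↦ x ∘ ρ` on `N`-fixed configurations. -/
lemma shift_comp {x : G → A} (hx : ∀ n ∈ N, shiftAct n x = x)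
    (ρ : G ⧸ N → G) (hρ : ∀ k, (QuotientGroup.mk (ρ k) : G ⧸ N) = k) (g : G) :
    shiftAct (QuotientGroup.mk g : G ⧸ N) (x ∘ ρ) = (shiftAct g x) ∘ ρ := by
  funext k
  simp only [shiftAct, Function.comp]
  apply fix_eq N hx
  rw [hρ]
  rw [show ((g⁻¹ * ρ k : G) : G ⧸ N) = (QuotientGroup.mk g)⁻¹ * QuotientGroup.mk (ρ k) by
    rw [QuotientGroup.mk_mul, QuotientGroup.mk_inv], hρ]

def Compat (p : Pattern G A) : Prop :=
  ∀ h₁ ∈ p.1, ∀ h₂ ∈ p.1,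
    (QuotientGroup.mk h₁ : G ⧸ N) = QuotientGroup.mk h₂ → p.2 h₁ = p.2 h₂

noncomputable def push (p : Pattern G A) : Pattern (G ⧸ N) A :=
  haveI := Classical.decEq (G ⧸ N)
  (p.1.image (QuotientGroup.mk : G → G ⧸ N),
   fun k => p.2 (Function.invFunOn (QuotientGroup.mk : G → G ⧸ N) ↑p.1 k))

lemma mem_push_fst {p : Pattern G A} {k : G ⧸ N} :
    k ∈ (push N p).1 ↔ ∃ h ∈ p.1, (QuotientGroup.mk h : G ⧸ N) = k := by
  haveI := Classical.decEq (G ⧸ N)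
  simp [push]

lemma push_snd (p : Pattern G A) (k : G ⧸ N) :
    (push N p).2 k = p.2 (Function.invFunOn (QuotientGroup.mk : G → G ⧸ N) ↑p.1 k) := rfl

lemma appears_iff (ρ : G ⧸ N → G) (hρ : ∀ k, (QuotientGroup.mk (ρ k) : G ⧸ N) = k)
    (p : Pattern G A) (y : G ⧸ N → A) :
    Appears p (fun g => y (QuotientGroup.mk g)) ↔ Compat N p ∧ Appears (push N p) y := by
  constructor
  · rintro ⟨g, hg⟩
    constructor
    · intro h₁ m₁ h₂ m₂ he
      have e1 : (QuotientGroup.mk (g * h₁) : G ⧸ N) = QuotientGroup.mk (g * h₂) := by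
        rw [QuotientGroup.mk_mul, QuotientGroup.mk_mul, he]
      calc p.2 h₁ = y (QuotientGroup.mk (g * h₁)) := (hg h₁ m₁).symm
        _ = y (QuotientGroup.mk (g * h₂)) := by rw [e1]
        _ = p.2 h₂ := hg h₂ m₂
    · refine ⟨QuotientGroup.mk g, ?_⟩
      intro k hk
      obtain ⟨h, hh, rfl⟩ := (mem_push_fst N).mp hk
      rw [push_snd]
      have hex : ∃ a ∈ (↑p.1 : Set G), QuotientGroup.mk a = (QuotientGroup.mk h : G ⧸ N) :=
        ⟨h, hh, rfl⟩
      have h'mem := Function.invFunOn_mem hex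
      have h'eq := Function.invFunOn_eq hex
      calc y ((QuotientGroup.mk g : G ⧸ N) * QuotientGroup.mk h)
          = y (QuotientGroup.mk
              (g * Function.invFunOn (QuotientGroup.mk : G → G ⧸ N) ↑p.1 (QuotientGroup.mk h))) := by
            rw [QuotientGroup.mk_mul, h'eq]
        _ = p.2 _ := hg _ h'mem
  · rintro ⟨hc, k, hk⟩
    refine ⟨ρ k, ?_⟩
    intro h hh
    have hmem : (QuotientGroup.mk h : G ⧸ N) ∈ (push N p).1 :=
      (mem_push_fst N).mpr ⟨h, hh, rfl⟩
    have hval := hk _ hmem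
    have hex : ∃ a ∈ (↑p.1 : Set G), QuotientGroup.mk a = (QuotientGroup.mk h : G ⧸ N) :=
      ⟨h, hh, rfl⟩
    have h'mem := Function.invFunOn_mem hex
    have h'eq := Function.invFunOn_eq hex
    calc y (QuotientGroup.mk (ρ k * h))
        = y (k * QuotientGroup.mk h) := by rw [QuotientGroup.mk_mul, hρ]
      _ = (push N p).2 (QuotientGroup.mk h) := hval
      _ = p.2 (Function.invFunOn (QuotientGroup.mk : G → G ⧸ N) ↑p.1 (QuotientGroup.mk h)) :=
          push_snd N p _
      _ = p.2 h := hc _ h'mem _ hh h'eq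

lemma pushSet_eq (ρ : G ⧸ N → G) (hρ : ∀ k, (QuotientGroup.mk (ρ k) : G ⧸ N) = k)
    (𝓕 : Set (Pattern G A))
    (hfix : ∀ x ∈ shiftSpace 𝓕, ∀ n ∈ N, shiftAct n x = x) :
    {y : G ⧸ N → A | ∃ x ∈ shiftSpace 𝓕, y = x ∘ ρ}
      = shiftSpace (push N '' {p ∈ 𝓕 | Compat N p}) := by
  ext y
  constructor
  · rintro ⟨x, hx, rfl⟩ p' ⟨p, ⟨hp, hcp⟩, rfl⟩ happ
    have hApp : Appears p (fun g => (x ∘ ρ) (QuotientGroup.mk g)) :=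
      (appears_iff N ρ hρ p _).mpr ⟨hcp, happ⟩
    have hxx : (fun g => (x ∘ ρ) (QuotientGroup.mk g)) = x :=
      funext fun g => comp_rho N (hfix x hx) ρ hρ g
    exact hx p hp (hxx ▸ hApp)
  · intro hy
    refine ⟨fun g => y (QuotientGroup.mk g), ?_, ?_⟩
    · intro p hp happ
      have h2 := (appears_iff N ρ hρ p y).mp happ
      exact hy _ ⟨p, ⟨hp, h2.1⟩, rfl⟩ h2.2
    · funext k
      simp only [Function.comp]
      rw [hρ]

lemma stab_comp (ρ : G ⧸ N → G) (hρ : ∀ k, (QuotientGroup.mk (ρ k) : G ⧸ N) = k)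
    {x : G → A} (hx : ∀ n ∈ N, shiftAct n x = x) :
    stab (x ∘ ρ) = Subgroup.map (QuotientGroup.mk' N) (stab x) := by
  ext k
  rw [Subgroup.mem_map]
  constructor
  · intro hk
    refine ⟨ρ k, ?_, hρ k⟩
    rw [mem_stab] at hk ⊢
    rw [← hρ k, shift_comp N hx ρ hρ (ρ k)] at hk
    exact fixed_eq_of_comp N (fix_shift N hx (ρ k)) hx ρ hρ hk
  · rintro ⟨g, hg, rfl⟩
    rw [mem_stab] at hg ⊢
    show shiftAct (QuotientGroup.mk g : G ⧸ N) (x ∘ ρ) = x ∘ ρ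
    rw [shift_comp N hx ρ hρ g, hg]

end Statement8Aux


/-- For a finitely generated normal subgroup `N ⊴ G` and a section
`ρ : G/N → G` of the quotient map `π`, the push-forward of a `G`-subshift contained in
`Fix_A(N)` is a `G/N`-subshift whose set of stabilizers is the set of images `π(K)` for
`K` a stabilizer of the original subshift; in particular, if a realizable family `𝒢` of
subgroups of `G` satisfies `N ⊆ H` for every `H ∈ 𝒢`, then `𝒢/N` is realizable in
`G/N`. -/
theorem statement8 {G : Type} [Group G] [Group.FG G] (N : Subgroup G) [N.Normal]
    (hNfg : N.FG) (ρ : G ⧸ N → G) (hρ : ∀ k, QuotientGroup.mk' N (ρ k) = k) :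
    (∀ (A : Type) (_ : Finite A) (_ : Nonempty A) (X : Set (G → A)),
        IsSubshift X → (∀ x ∈ X, ∀ n ∈ N, shiftAct n x = x) →
          IsSubshift {y : G ⧸ N → A | ∃ x ∈ X, y = x ∘ ρ} ∧
          stab '' {y : G ⧸ N → A | ∃ x ∈ X, y = x ∘ ρ} =
            (fun K => Subgroup.map (QuotientGroup.mk' N) K) '' (stab '' X)) ∧
    (∀ 𝒢 : Set (Subgroup G), Realizable 𝒢 → (∀ H ∈ 𝒢, N ≤ H) →
        Realizable ((fun K => Subgroup.map (QuotientGroup.mk' N) K) '' 𝒢)) := by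
  
  have hρ' : ∀ k, (QuotientGroup.mk (ρ k) : G ⧸ N) = k := hρ
  constructor
  · rintro A _ _ X ⟨𝓕, rfl⟩ hfix
    refine ⟨⟨_, Statement8Aux.pushSet_eq N ρ hρ' 𝓕 hfix⟩, ?_⟩
    have himg : {y : G ⧸ N → A | ∃ x ∈ shiftSpace 𝓕, y = x ∘ ρ}
        = (fun x => x ∘ ρ) '' shiftSpace 𝓕 := by
      ext y; simp only [Set.mem_image, Set.mem_setOf_eq]
      constructor
      · rintro ⟨x, hx, rfl⟩; exact ⟨x, hx, rfl⟩
      · rintro ⟨x, hx, rfl⟩; exact ⟨x, hx, rfl⟩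
    rw [himg, Set.image_image, Set.image_image]
    exact Set.image_congr fun x hx => Statement8Aux.stab_comp N ρ hρ' (hfix x hx)
  · rintro 𝒢 ⟨A, fA, nA, X, ⟨𝓕, hfin, rfl⟩, hne, hstab⟩ hN
    have hfix : ∀ x ∈ shiftSpace 𝓕, ∀ n ∈ N, shiftAct n x = x := by
      intro x hx n hn
      have hmem : stab x ∈ 𝒢 := hstab ▸ Set.mem_image_of_mem _ hx
      exact hN _ hmem hn
    refine ⟨A, fA, nA, {y | ∃ x ∈ shiftSpace 𝓕, y = x ∘ ρ}, ?_, ?_, ?_⟩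
    · exact ⟨_, (hfin.subset (Set.sep_subset _ _)).image _,
        Statement8Aux.pushSet_eq N ρ hρ' 𝓕 hfix⟩
    · obtain ⟨x, hx⟩ := hne
      exact ⟨x ∘ ρ, x, hx, rfl⟩
    · have himg : {y : G ⧸ N → A | ∃ x ∈ shiftSpace 𝓕, y = x ∘ ρ}
          = (fun x => x ∘ ρ) '' shiftSpace 𝓕 := by
        ext y; simp only [Set.mem_image, Set.mem_setOf_eq]
        constructor
        · rintro ⟨x, hx, rfl⟩; exact ⟨x, hx, rfl⟩
        · rintro ⟨x, hx, rfl⟩; exact ⟨x, hx, rfl⟩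
      rw [himg, Set.image_image, ← hstab, Set.image_image]
      exact Set.image_congr fun x hx => Statement8Aux.stab_comp N ρ hρ' (hfix x hx)
end

section
/- Every finite-index normal subgroup of a finitely generated group is realizable: if N is a normal subgroup of finite index in a finitely generated group G, then there exists a nonempty finite alphabet A and a nonempty G-SFT X ⊆ A^G with stab(x) = N for every x ∈ X. -/
/-- Every finite-index normal subgroup of a finitely generated group
is realizable. -/
theorem statement10 {G : Type} [Group G] [Group.FG G] (N : Subgroup G) [N.Normal]
    [N.FiniteIndex] :
    ∃ (A : Type) (_ : Finite A) (_ : Nonempty A) (X : Set (G → A)),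
      IsSFT X ∧ X.Nonempty ∧ ∀ x ∈ X, stab x = N := by
  classical
  obtain ⟨S, hS⟩ := Group.FG.out (G := G)
  set Q := G ⧸ N with hQ
  let π : G →* Q := QuotientGroup.mk' N
  -- forbidden patterns
  let mk : G × Q × Q → Pattern G Q := fun t =>
    (({1, t.1} : Finset G), fun h => if h = t.1 then t.2.2 else t.2.1)
  let D : Set (G × Q × Q) := {t | t.1 ∈ S ∧ t.1 ≠ 1 ∧ t.2.2 ≠ π t.1⁻¹ * t.2.1}
  let 𝓕 : Set (Pattern G Q) := mk '' D
  have hDfin : D.Finite := by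
    have : D ⊆ (S : Set G) ×ˢ (Set.univ : Set (Q × Q)) := by
      intro t ht; exact ⟨ht.1, trivial⟩
    exact Set.Finite.subset (Set.Finite.prod S.finite_toSet Set.finite_univ) this
  refine ⟨Q, inferInstance, inferInstance, shiftSpace 𝓕, ⟨𝓕, hDfin.image mk, rfl⟩, ?_, ?_⟩
  · -- nonempty: x₀ g = π g⁻¹
    refine ⟨fun g => π g⁻¹, ?_⟩
    rintro p ⟨⟨s, a, b⟩, ht, rfl⟩ ⟨g, hg⟩
    obtain ⟨hsS, hs1, hb⟩ := ht
    have h1 : π (g * 1)⁻¹ = a := by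
      have := hg 1 (by simp [mk])
      simpa [mk, if_neg (Ne.symm hs1)] using this
    have h2 : π (g * s)⁻¹ = b := by
      have := hg s (by simp [mk])
      simpa [mk] using this
    apply hb
    rw [← h2, ← h1]
    simp [mul_inv_rev, map_mul]
  · -- every element of X has stabilizer N
    intro x hx
    -- local relation
    have hrel : ∀ g : G, ∀ s ∈ S, x (g * s) = π s⁻¹ * x g := by
      intro g s hsS
      by_cases hs1 : s = 1
      · simp [hs1, map_one]
      by_contra hne
      exact hx (mk (s, x g, x (g * s))) ⟨(s, x g, x (g * s)), ⟨hsS, hs1, hne⟩, rfl⟩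
        ⟨g, by
          intro h hh
          simp only [mk, Finset.mem_insert, Finset.mem_singleton] at hh
          rcases hh with rfl | rfl
          · simp [mk, if_neg (Ne.symm hs1)]
          · simp [mk]⟩
    -- the set of g satisfying the global relation is a subgroup containing S
    let K : Subgroup G :=
      { carrier := {g | ∀ k : G, x (k * g) = π g⁻¹ * x k}
        one_mem' := by intro k; simp [map_one]
        mul_mem' := by
          intro a b ha hb k
          have h1 := hb (k * a)
          have h2 := ha k
          rw [← mul_assoc, h1, h2, mul_inv_rev, map_mul, mul_assoc]
        inv_mem' := by
          intro a ha k
          have := ha (k * a⁻¹)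
          rw [inv_mul_cancel_right] at this
          rw [this, inv_inv, ← mul_assoc, ← map_mul, mul_inv_cancel, map_one, one_mul] }
    have hSK : (S : Set G) ⊆ K := by
      intro s hs k; exact hrel k s hs
    have hKtop : K = ⊤ := top_le_iff.mp (hS ▸ Subgroup.closure_le K |>.mpr hSK)
    have hxg : ∀ g : G, x g = π g⁻¹ * x 1 := by
      intro g
      have hg : g ∈ K := hKtop ▸ Subgroup.mem_top g
      have := hg 1
      rwa [one_mul] at this
    -- compute stabilizer
    ext n
    constructor
    · intro hn
      have hn' : shiftAct n x = x := hn
      have := congrFun hn' 1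
      simp only [shiftAct, mul_one] at this
      rw [hxg n⁻¹] at this
      rw [inv_inv] at this
      have h2 : π n = 1 := by
        have := mul_eq_right.mp this
        exact this
      exact (QuotientGroup.eq_one_iff n).mp h2
    · intro hn
      show shiftAct n x = x
      funext h
      simp only [shiftAct]
      have hπn : π n = 1 := (QuotientGroup.eq_one_iff n).mpr hn
      rw [hxg (n⁻¹ * h), hxg h, mul_inv_rev, inv_inv, map_mul, hπn, mul_one]
end

section
/- Let G be a finitely generated group and let 𝒢₁, …, 𝒢ₙ be realizable families of subgroups of G. Then the union 𝒢₁ ∪ … ∪ 𝒢ₙ is realizable. -/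
/-- A finite union of realizable families of subgroups is realizable. -/
theorem statement11 {G : Type} [Group G] [Group.FG G] (n : ℕ) (hn : 0 < n)
    (𝒢 : Fin n → Set (Subgroup G)) (h : ∀ i, Realizable (𝒢 i)) :
    Realizable (⋃ i, 𝒢 i) := by
  classical
  choose A fA nA X hSFT hNE hstab using h
  choose 𝓕 h𝓕fin h𝓕eq using hSFT
  haveI : ∀ i, Finite (A i) := fA
  obtain ⟨S, hS, hSfin⟩ := Group.fg_iff.mp ‹Group.FG G›
  set B : Type := (i : Fin n) × A i with hB
  haveI : Finite B := by infer_instance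
  haveI : Nonempty B := ⟨⟨⟨0, hn⟩, Classical.choice (nA ⟨0, hn⟩)⟩⟩
  -- the embedding of each component
  set ι : ∀ i, (G → A i) → (G → B) := fun i x g => ⟨i, x g⟩ with hι
  have ι_inj : ∀ i, Function.Injective (ι i) := by
    intro i x y hxy
    funext g
    have := congrFun hxy g
    exact sigma_mk_injective this
  -- lifted forbidden patterns
  set lift : ∀ i, Pattern G (A i) → Pattern G B :=
    fun i p => (p.1, fun h => ⟨i, p.2 h⟩) with hlift
  set 𝓕lift : Set (Pattern G B) := ⋃ i, lift i '' (𝓕 i) with h𝓕lift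
  -- mixing patterns
  set mk : G × B × B → Pattern G B :=
    fun t => (({1, t.1} : Finset G), fun h => if h = 1 then t.2.1 else t.2.2) with hmk
  set D : Set (G × B × B) := {t | t.1 ∈ S ∧ t.1 ≠ 1 ∧ t.2.1.1 ≠ t.2.2.1} with hD
  set 𝓕mix : Set (Pattern G B) := mk '' D with h𝓕mix
  have hDfin : D.Finite := by
    apply Set.Finite.subset (hSfin.prod Set.finite_univ)
    rintro ⟨s, a, b⟩ ⟨h1, -, -⟩
    exact ⟨h1, trivial⟩
  -- patterns in 𝓕 i have nonempty support
  have hsupp : ∀ i, ∀ p ∈ 𝓕 i, p.1.Nonempty := by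
    intro i p hp
    by_contra hemp
    rw [Finset.not_nonempty_iff_eq_empty] at hemp
    obtain ⟨w, hw⟩ := hNE i
    rw [h𝓕eq i] at hw
    exact hw p hp ⟨1, by simp [hemp]⟩
  -- the key equality
  have key : shiftSpace (𝓕lift ∪ 𝓕mix) = ⋃ i, ι i '' (X i) := by
    ext x
    constructor
    · intro hx
      -- the component is constant
      set c : G → Fin n := fun g => (x g).1 with hc
      have hmixavoid : ∀ k : G, ∀ s ∈ S, c (k * s) = c k := by
        intro k s hsS
        by_cases hs1 : s = 1
        · simp [hs1]
        by_contra hne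
        have hmem : mk (s, x k, x (k * s)) ∈ 𝓕mix :=
          ⟨(s, x k, x (k * s)), ⟨hsS, hs1, fun e => hne e.symm⟩, rfl⟩
        apply hx _ (Or.inr hmem)
        refine ⟨k, ?_⟩
        intro h hh
        simp only [hmk, Finset.mem_insert, Finset.mem_singleton] at hh ⊢
        rcases hh with rfl | rfl
        · simp
        · simp [hs1]
      set H : Subgroup G :=
        { carrier := {g | ∀ k, c (k * g) = c k}
          one_mem' := by intro k; simp
          mul_mem' := by
            intro a b ha hb k
            rw [← mul_assoc]
            rw [hb (k * a), ha k]
          inv_mem' := by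
            intro a ha k
            have := ha (k * a⁻¹)
            rw [mul_assoc, inv_mul_cancel, mul_one] at this
            exact this.symm } with hH
      have hHtop : H = ⊤ := by
        rw [eq_top_iff, ← hS]
        apply (Subgroup.closure_le H).mpr
        intro s hsS k
        exact hmixavoid k s hsS
      have hconst : ∀ g : G, (x g).1 = (x 1).1 := by
        intro g
        have hg : g ∈ H := hHtop ▸ Subgroup.mem_top g
        have := hg 1
        rwa [one_mul] at this
      set i : Fin n := (x 1).1 with hi
      set y : G → A i := fun g => (hconst g) ▸ (x g).2 with hy
      have hxy : ∀ g, x g = ⟨i, y g⟩ := by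
        intro g
        refine Sigma.ext (hconst g) ?_
        exact (eqRec_heq (hconst g) (x g).2).symm
      refine Set.mem_iUnion.mpr ⟨i, y, ?_, ?_⟩
      · rw [h𝓕eq i]
        intro p hp ⟨g, hg⟩
        apply hx (lift i p) (Or.inl (Set.mem_iUnion.mpr ⟨i, p, hp, rfl⟩))
        refine ⟨g, fun h hh => ?_⟩
        rw [hxy (g * h)]
        simp only [hlift]
        rw [hg h hh]
      · funext g
        exact (hxy g).symm
    · intro hx
      obtain ⟨i, y, hyX, rfl⟩ := Set.mem_iUnion.mp hx
      intro p hp hap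
      rcases hp with hp | hp
      · obtain ⟨j, q, hq, rfl⟩ := Set.mem_iUnion.mp hp
        obtain ⟨g, hg⟩ := hap
        obtain ⟨h0, hh0⟩ := hsupp j q hq
        have := hg h0 hh0
        simp only [hlift, hι] at this
        have hij : i = j := congrArg Sigma.fst this
        subst hij
        rw [h𝓕eq i] at hyX
        apply hyX q hq
        refine ⟨g, fun h hh => ?_⟩
        have := hg h hh
        simp only [hlift, hι] at this
        exact sigma_mk_injective this
      · obtain ⟨⟨s, a, b⟩, ⟨hsS, hs1, hab⟩, rfl⟩ := hp
        obtain ⟨g, hg⟩ := hap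
        have h1 : ι i y (g * 1) = a := by simpa [hmk] using hg 1 (by simp [hmk])
        have h2 : ι i y (g * s) = b := by simpa [hmk, hs1] using hg s (by simp [hmk])
        apply hab
        rw [← congrArg Sigma.fst h1, ← congrArg Sigma.fst h2]
  refine ⟨B, inferInstance, inferInstance, ⋃ i, ι i '' (X i), ?_, ?_, ?_⟩
  · refine ⟨𝓕lift ∪ 𝓕mix, ?_, key.symm⟩
    apply Set.Finite.union
    · exact Set.finite_iUnion fun i => (h𝓕fin i).image _
    · exact hDfin.image _
  · obtain ⟨w, hw⟩ := hNE ⟨0, hn⟩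
    exact ⟨ι ⟨0, hn⟩ w, Set.mem_iUnion.mpr ⟨⟨0, hn⟩, w, hw, rfl⟩⟩
  · have hstabι : ∀ i (y : G → A i), stab (ι i y) = stab y := by
      intro i y
      ext g
      show shiftAct g (ι i y) = ι i y ↔ shiftAct g y = y
      constructor
      · intro he
        funext h
        have := congrFun he h
        exact sigma_mk_injective this
      · intro he
        funext h
        show (⟨i, y (g⁻¹ * h)⟩ : B) = ⟨i, y h⟩
        rw [show y (g⁻¹ * h) = y h from congrFun he h]
    rw [Set.image_iUnion]
    apply Set.iUnion_congr
    intro i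
    rw [← hstab i, Set.image_image]
    exact Set.image_congr fun y _ => hstabι i y
end

section
/- Let G₁ be a finitely generated infinite group that admits a nonempty weakly aperiodic G₁-SFT, and let G₂ be a finitely generated infinite group. Then for any action φ of G₂ on G₁ by automorphisms, the semidirect product G₁ ⋊_φ G₂ is not periodically rigid: it admits a nonempty weakly aperiodic SFT that is not strongly aperiodic. -/
namespace Aux15

open SemidirectProduct

variable {G₁ G₂ : Type} [Group G₁] [Group G₂] {A : Type} {φ : G₂ →* MulAut G₁}

open scoped Classical

/-- The `b`-th twisted row of a configuration on the semidirect product. -/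
def row (φ : G₂ →* MulAut G₁) (b : G₂) (y : (G₁ ⋊[φ] G₂) → A) : G₁ → A :=
  fun g₁ => y ⟨φ b g₁, b⟩

/-- Lift of a pattern on `G₁` to the semidirect product. -/
noncomputable def lift (φ : G₂ →* MulAut G₁) (p : Pattern G₁ A) : Pattern (G₁ ⋊[φ] G₂) A :=
  (p.1.image (inl : G₁ →* G₁ ⋊[φ] G₂), fun g => p.2 g.left)

lemma appears_lift_iff (p : Pattern G₁ A) (y : (G₁ ⋊[φ] G₂) → A) :
    Appears (lift φ p) y ↔ ∃ b : G₂, Appears p (row φ b y) := by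
  constructor
  · rintro ⟨g, hg⟩
    refine ⟨g.right, (φ g.right)⁻¹ g.left, fun h hh => ?_⟩
    have := hg (inl h) (Finset.mem_image_of_mem _ hh)
    have harg : (⟨φ g.right ((φ g.right)⁻¹ g.left * h), g.right⟩ : G₁ ⋊[φ] G₂)
        = g * inl h := by
      ext <;> simp [mul_left, mul_right]
    show y ⟨φ g.right ((φ g.right)⁻¹ g.left * h), g.right⟩ = p.2 h
    rw [harg]; exact this
  · rintro ⟨b, a, ha⟩
    refine ⟨⟨φ b a, b⟩, fun h' hh' => ?_⟩
    rcases Finset.mem_image.1 hh' with ⟨h, hh, rfl⟩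
    have := ha h hh
    have harg : (⟨φ b a, b⟩ : G₁ ⋊[φ] G₂) * inl h = ⟨φ b (a * h), b⟩ := by
      ext <;> simp [mul_left, mul_right]
    show y (⟨φ b a, b⟩ * inl h) = p.2 h
    rw [harg]; exact this

lemma mem_lift_shiftSpace_iff (𝓕 : Set (Pattern G₁ A)) (y : (G₁ ⋊[φ] G₂) → A) :
    y ∈ shiftSpace (lift φ '' 𝓕) ↔ ∀ b : G₂, row φ b y ∈ shiftSpace 𝓕 := by
  constructor
  · intro hy b p hp hap
    exact hy (lift φ p) ⟨p, hp, rfl⟩ ((appears_lift_iff p y).2 ⟨b, hap⟩)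
  · rintro hy q ⟨p, hp, rfl⟩ hap
    rcases (appears_lift_iff p y).1 hap with ⟨b, hb⟩
    exact hy b p hp hb

lemma row_one_shift (a : G₁) (y : (G₁ ⋊[φ] G₂) → A) :
    row φ 1 (shiftAct (inl a) y) = shiftAct a (row φ 1 y) := by
  funext g₁
  simp only [row, shiftAct]
  congr 1
  have : ((inl a : G₁ ⋊[φ] G₂))⁻¹ = inl a⁻¹ := by rw [← map_inv]
  rw [this]
  ext <;> simp [mul_left, mul_right]

end Aux15

/-- If `G₁` is a finitely generated infinite group admitting a nonempty
weakly aperiodic SFT and `G₂` is a finitely generated infinite group, then any semidirect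
product `G₁ ⋊[φ] G₂` is not periodically rigid. -/
theorem statement15 {G₁ G₂ : Type} [Group G₁] [Group G₂] [Group.FG G₁] [Group.FG G₂]
    [Infinite G₁] [Infinite G₂]
    (hwa : ∃ (A : Type) (_ : Finite A) (_ : Nonempty A) (X : Set (G₁ → A)),
        IsSFT X ∧ X.Nonempty ∧ WeaklyAperiodic X)
    (φ : G₂ →* MulAut G₁) :
    ∃ (A : Type) (_ : Finite A) (_ : Nonempty A) (X : Set ((G₁ ⋊[φ] G₂) → A)),
      IsSFT X ∧ X.Nonempty ∧ WeaklyAperiodic X ∧ ¬ StronglyAperiodic X := by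
  obtain ⟨A, hA, hNe, X, ⟨𝓕, h𝓕fin, hX⟩, hXne, hXwa⟩ := hwa
  obtain ⟨x₀, hx₀⟩ := hXne
  set Y : Set ((G₁ ⋊[φ] G₂) → A) := shiftSpace (Aux15.lift φ '' 𝓕) with hY
  -- the distinguished configuration
  set y₀ : (G₁ ⋊[φ] G₂) → A := fun g => x₀ (φ g.right⁻¹ g.left) with hy₀def
  have hrow₀ : ∀ b : G₂, Aux15.row φ b y₀ = x₀ := by
    intro b
    funext g₁
    simp only [Aux15.row, hy₀def]
    rw [← MulAut.mul_apply, ← map_mul, inv_mul_cancel, map_one, MulAut.one_apply]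
  have hy₀ : y₀ ∈ Y := by
    rw [hY, Aux15.mem_lift_shiftSpace_iff]
    intro b
    rw [hrow₀ b, ← hX]
    exact hx₀
  refine ⟨A, hA, hNe, Y, ⟨Aux15.lift φ '' 𝓕, h𝓕fin.image _, rfl⟩, ⟨y₀, hy₀⟩, ?_, ?_⟩
  · -- weakly aperiodic
    intro y hy hfin
    have hyrow : Aux15.row φ 1 y ∈ X := by
      rw [hX]
      exact (Aux15.mem_lift_shiftSpace_iff 𝓕 y).1 hy 1
    apply hXwa (Aux15.row φ 1 y) hyrow
    have hsub : orbitSet (Aux15.row φ 1 y) ⊆ (Aux15.row φ 1) '' orbitSet y := by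
      rintro _ ⟨a, rfl⟩
      exact ⟨shiftAct (SemidirectProduct.inl a) y, ⟨_, rfl⟩, (Aux15.row_one_shift a y)⟩
    exact Set.Finite.subset (hfin.image _) hsub
  · -- not strongly aperiodic
    intro hsa
    obtain ⟨b, hb⟩ := exists_ne (1 : G₂)
    have hmem : (SemidirectProduct.inr b : G₁ ⋊[φ] G₂) ∈ stab y₀ := by
      show shiftAct (SemidirectProduct.inr b) y₀ = y₀
      funext g
      simp only [shiftAct, hy₀def]
      congr 1
      have hinv : ((SemidirectProduct.inr b : G₁ ⋊[φ] G₂))⁻¹ = SemidirectProduct.inr b⁻¹ := by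
        rw [← map_inv]
      rw [hinv]
      have hleft : ((SemidirectProduct.inr b⁻¹ : G₁ ⋊[φ] G₂) * g).left = φ b⁻¹ g.left := by
        simp [SemidirectProduct.mul_left]
      have hright : ((SemidirectProduct.inr b⁻¹ : G₁ ⋊[φ] G₂) * g).right = b⁻¹ * g.right := by
        simp [SemidirectProduct.mul_right]
      rw [hleft, hright, ← MulAut.mul_apply, ← map_mul]
      congr 2
      group
    rw [hsa y₀ hy₀, Subgroup.mem_bot] at hmem
    exact hb (by simpa using SemidirectProduct.inr_injective (by simpa using hmem))
end

section
/- Let G be a finitely generated group and N a nontrivial finitely generated normal subgroup of G. If the quotient G/N admits a nonempty weakly aperiodic SFT, then G is not periodically rigid: there exists a nonempty weakly aperiodic G-SFT that is not strongly aperiodic. -/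
section AuxProof

attribute [local instance] Classical.decEq

variable {G : Type} [Group G] {A : Type}

lemma shiftAct_comp_mk (N : Subgroup G) [N.Normal] (x : G ⧸ N → A) (g : G) :
    shiftAct g (x ∘ QuotientGroup.mk) =
      (shiftAct (QuotientGroup.mk g : G ⧸ N) x) ∘ QuotientGroup.mk := by
  funext h
  simp only [shiftAct, Function.comp_apply, QuotientGroup.mk_mul, QuotientGroup.mk_inv]

/-- Lift a pattern on `G ⧸ N` to a pattern on `G` via a section. -/
noncomputable def liftPat (N : Subgroup G) [N.Normal] (p : Pattern (G ⧸ N) A) : Pattern G A :=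
  (p.1.image Quotient.out, fun g => p.2 (QuotientGroup.mk g))

lemma appears_lift (N : Subgroup G) [N.Normal] (x : G ⧸ N → A) (p : Pattern (G ⧸ N) A) :
    Appears (liftPat N p) (x ∘ QuotientGroup.mk) ↔ Appears p x := by
  constructor
  · rintro ⟨g, hg⟩
    refine ⟨QuotientGroup.mk g, ?_⟩
    intro q hq
    have hmem : q.out ∈ (liftPat N p).1 := by
      simp only [liftPat, Finset.mem_image]
      exact ⟨q, hq, rfl⟩
    have h := hg q.out hmem
    simp only [liftPat, Function.comp_apply] at h
    rw [QuotientGroup.mk_mul, QuotientGroup.out_eq'] at h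
    exact h
  · rintro ⟨c, hc⟩
    refine ⟨c.out, ?_⟩
    intro h hh
    simp only [liftPat, Finset.mem_image] at hh
    obtain ⟨q, hq, rfl⟩ := hh
    simp only [liftPat, Function.comp_apply]
    rw [QuotientGroup.mk_mul, QuotientGroup.out_eq', QuotientGroup.out_eq']
    exact hc q hq

lemma constOn_closure (y : G → A) (S : Set G) (hS : ∀ s ∈ S, ∀ g, y (g * s) = y g) :
    ∀ n ∈ Subgroup.closure S, ∀ g, y (g * n) = y g := by
  intro n hn
  induction hn using Subgroup.closure_induction with
  | mem s hs => exact hS s hs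
  | one => intro g; rw [mul_one]
  | mul a b _ _ ha hb => intro g; rw [← mul_assoc, hb, ha]
  | inv a _ ha =>
      intro g
      have h := ha (g * a⁻¹)
      rw [inv_mul_cancel_right] at h
      exact h.symm

end AuxProof

/-- If `N` is a nontrivial finitely generated normal subgroup of a
finitely generated group `G` and `G/N` admits a nonempty weakly aperiodic SFT, then `G`
is not periodically rigid. -/
theorem statement16 {G : Type} [Group G] [Group.FG G] (N : Subgroup G) [N.Normal]
    (hN : N ≠ ⊥) (hNfg : N.FG)
    (hwa : ∃ (A : Type) (_ : Finite A) (_ : Nonempty A) (X : Set (G ⧸ N → A)),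
        IsSFT X ∧ X.Nonempty ∧ WeaklyAperiodic X) :
    ∃ (A : Type) (_ : Finite A) (_ : Nonempty A) (X : Set (G → A)),
      IsSFT X ∧ X.Nonempty ∧ WeaklyAperiodic X ∧ ¬ StronglyAperiodic X := by
  classical
  obtain ⟨A, hAfin, hAne, X, hXsft, hXne, hXwa⟩ := hwa
  obtain ⟨𝓕, h𝓕fin, hXF⟩ := hXsft
  obtain ⟨S, hS⟩ := hNfg
  set S' : Finset G := S.erase 1 with hS'def
  have hS' : Subgroup.closure (↑S' : Set G) = N := by
    refine le_antisymm ?_ ?_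
    · rw [← hS]
      exact Subgroup.closure_mono (Finset.coe_subset.mpr (Finset.erase_subset 1 S))
    · rw [← hS, Subgroup.closure_le]
      intro s hs
      by_cases h1 : s = 1
      · subst h1; exact Subgroup.one_mem _
      · exact Subgroup.subset_closure
          (Finset.mem_coe.mpr (Finset.mem_erase.mpr ⟨h1, Finset.mem_coe.mp hs⟩))
  have hS'N : ∀ s ∈ S', s ∈ N := by
    intro s hs
    rw [← hS']
    exact Subgroup.subset_closure hs
  -- the pullback map
  set e : (G ⧸ N → A) → (G → A) := fun x => x ∘ QuotientGroup.mk with he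
  have heinj : Function.Injective e := by
    intro a b hab
    funext c
    obtain ⟨g, rfl⟩ := QuotientGroup.mk_surjective c
    exact congrFun hab g
  -- coset-constancy patterns
  set 𝓒 : Set (Pattern G A) :=
    (fun t : G × A × A => (({1, t.1} : Finset G),
      fun g => if g = 1 then t.2.1 else t.2.2)) '' {t | t.1 ∈ S' ∧ t.2.1 ≠ t.2.2} with h𝓒
  have h𝓒fin : 𝓒.Finite := by
    apply Set.Finite.image
    apply Set.Finite.subset ((S'.finite_toSet).prod (Set.finite_univ.prod Set.finite_univ))
    intro t ht
    exact ⟨ht.1, trivial, trivial⟩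
  set 𝓖 : Set (Pattern G A) := 𝓒 ∪ (liftPat N '' 𝓕) with h𝓖
  set Y : Set (G → A) := e '' X with hY
  -- key: Y = shiftSpace 𝓖
  have hYF : Y = shiftSpace 𝓖 := by
    ext y
    constructor
    · rintro ⟨x, hx, rfl⟩
      intro p hp
      rcases hp with hp | ⟨q, hq, rfl⟩
      · obtain ⟨⟨s, a, b⟩, ⟨hsS, hab⟩, rfl⟩ := hp
        rintro ⟨g, hg⟩
        have hs1 : s ≠ 1 := Finset.ne_of_mem_erase (hS'def ▸ hsS)
        have h1 := hg 1 (Finset.mem_insert_self _ _)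
        have h2 := hg s (Finset.mem_insert_of_mem (Finset.mem_singleton_self _))
        simp only [if_pos rfl, if_neg hs1, mul_one] at h1 h2
        have hsame : e x (g * s) = e x g := by
          show x _ = x _
          congr 1
          rw [QuotientGroup.mk_mul, (QuotientGroup.eq_one_iff s).mpr (hS'N s hsS), mul_one]
        rw [h1, h2] at hsame
        exact hab hsame.symm
      · show ¬ Appears (liftPat N q) (x ∘ QuotientGroup.mk)
        rw [appears_lift N x q]
        have hx' := hXF ▸ hx
        exact hx' q hq
    · intro hy
      -- y is constant on right multiplication by S'
      have hstep : ∀ s ∈ (↑S' : Set G), ∀ g, y (g * s) = y g := by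
        intro s hs g
        by_contra hne
        have hs1 : s ≠ 1 := Finset.ne_of_mem_erase (hS'def ▸ Finset.mem_coe.mp hs)
        refine hy (({1, s} : Finset G), fun h => if h = 1 then y g else y (g * s))
          (Or.inl ⟨(s, y g, y (g * s)), ⟨Finset.mem_coe.mp hs, fun h => hne h.symm⟩, rfl⟩)
          ⟨g, ?_⟩
        intro h hh
        rcases Finset.mem_insert.mp hh with rfl | hh
        · simp
        · rw [Finset.mem_singleton] at hh
          subst hh
          simp [if_neg hs1]
      have hconst : ∀ n ∈ N, ∀ g, y (g * n) = y g := by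
        rw [← hS']
        exact constOn_closure y _ hstep
      set x : G ⧸ N → A := fun c => y c.out with hxdef
      have hyx : y = x ∘ QuotientGroup.mk := by
        funext g
        show y g = y (QuotientGroup.mk g : G ⧸ N).out
        have hn : g⁻¹ * (QuotientGroup.mk g : G ⧸ N).out ∈ N := by
          rw [← QuotientGroup.eq_one_iff, QuotientGroup.mk_mul, QuotientGroup.mk_inv,
            QuotientGroup.out_eq', inv_mul_cancel]
        have h := hconst _ hn g
        rw [mul_inv_cancel_left] at h
        exact h.symm
      refine ⟨x, ?_, hyx.symm⟩
      rw [hXF]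
      intro p hp hap
      rw [← appears_lift N x p] at hap
      rw [← hyx] at hap
      exact hy (liftPat N p) (Or.inr ⟨p, hp, rfl⟩) hap
  refine ⟨A, hAfin, hAne, Y, ⟨𝓖, h𝓒fin.union (h𝓕fin.image _), hYF⟩, ?_, ?_, ?_⟩
  · obtain ⟨x0, hx0⟩ := hXne
    exact ⟨e x0, ⟨x0, hx0, rfl⟩⟩
  · rintro y ⟨x, hx, rfl⟩
    have horb : orbitSet (e x) = e '' orbitSet x := by
      ext z
      constructor
      · rintro ⟨g, rfl⟩
        exact ⟨shiftAct (QuotientGroup.mk g : G ⧸ N) x, ⟨_, rfl⟩, (shiftAct_comp_mk N x g).symm⟩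
      · rintro ⟨_, ⟨c, rfl⟩, rfl⟩
        obtain ⟨g, rfl⟩ := QuotientGroup.mk_surjective c
        exact ⟨g, shiftAct_comp_mk N x g⟩
    rw [horb]
    exact (hXwa x hx).image heinj.injOn
  · intro hsa
    obtain ⟨⟨n, hnN⟩, hn1⟩ := Subgroup.ne_bot_iff_exists_ne_one.mp hN
    have hn1' : n ≠ 1 := by simpa using hn1
    obtain ⟨x0, hx0⟩ := hXne
    have hy0 : e x0 ∈ Y := ⟨x0, hx0, rfl⟩
    have hmem : n ∈ stab (e x0) := by
      show shiftAct n (e x0) = e x0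
      funext h
      show x0 _ = x0 _
      congr 1
      rw [QuotientGroup.mk_mul, QuotientGroup.mk_inv,
        (QuotientGroup.eq_one_iff n).mpr hnN, inv_one, one_mul]
    rw [hsa (e x0) hy0] at hmem
    exact hn1' (Subgroup.mem_bot.mp hmem)
end
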